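/- arXiv:1809.09676 — 8 statements merged into one kernel-verified Lean document; each statement's English description precedes it below -/
import Mathlib

section
/- If state σ is reached from the initial state of n chips at the origin, then S_{σ^L}(b/a) = n − a·(f_0(σ) − f_1(σ)) and S_{σ^R}(b/a) = a·(f_0(σ) − f_1(σ)). In particular both values are integers. -/
/-- Firing at vertex `i` in the `a`-`b` chip-firing game on `ℤ`:
requires at least `a+b` chips at `i`, sends `a` chips to `i-1` and `b` chips to `i+1`. -/
def fireAt (a b : ℕ) (i : ℤ) (σ σ' : ℤ →₀ ℕ) : Prop :=
  a + b ≤ σ i ∧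
  σ' (i - 1) = σ (i - 1) + a ∧
  σ' i = σ i - (a + b) ∧
  σ' (i + 1) = σ (i + 1) + b ∧
  ∀ m : ℤ, m ≠ i - 1 → m ≠ i → m ≠ i + 1 → σ' m = σ m

/-- Reachability by a finite sequence of firings. -/
def Reaches (a b : ℕ) : (ℤ →₀ ℕ) → (ℤ →₀ ℕ) → Prop :=
  Relation.ReflTransGen (fun σ σ' => ∃ i, fireAt a b i σ σ')

/-- Initial state: `n` chips at the origin. -/
noncomputable def initState (n : ℕ) : ℤ →₀ ℕ := Finsupp.single 0 n

/-- `Leads a b σ L σ'`: the list `L` of vertices, fired in order (each legal),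
leads from state `σ` to state `σ'`. -/
inductive Leads (a b : ℕ) : (ℤ →₀ ℕ) → List ℤ → (ℤ →₀ ℕ) → Prop
  | nil (σ : ℤ →₀ ℕ) : Leads a b σ [] σ
  | cons {σ τ σ' : ℤ →₀ ℕ} {i : ℤ} {L : List ℤ} :
      fireAt a b i σ τ → Leads a b τ L σ' → Leads a b σ (i :: L) σ'

/-- The state polynomial `S_σ(t) = Σ_m s_m t^{-m}` evaluated at `t`. -/
noncomputable def statePoly (σ : ℤ →₀ ℕ) (t : ℚ) : ℚ :=
  ∑ m ∈ σ.support, (σ m : ℚ) * t ^ (-m)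

/-- The left part `S_{σ^L}(t) = Σ_{m ≤ 0} s_m t^{-m}`. -/
noncomputable def statePolyL (σ : ℤ →₀ ℕ) (t : ℚ) : ℚ :=
  ∑ m ∈ σ.support.filter (fun m => m ≤ 0), (σ m : ℚ) * t ^ (-m)

/-- The right part `S_{σ^R}(t) = Σ_{m ≥ 1} s_m t^{-m}`. -/
noncomputable def statePolyR (σ : ℤ →₀ ℕ) (t : ℚ) : ℚ :=
  ∑ m ∈ σ.support.filter (fun m => 1 ≤ m), (σ m : ℚ) * t ^ (-m)

/-- `M_σ = Σ_m m·s_m`. -/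
def Mval (σ : ℤ →₀ ℕ) : ℤ := ∑ m ∈ σ.support, m * (σ m : ℤ)

/-- A final (stable) state of the game started with `n` chips at the origin. -/
def IsFinalState (a b n : ℕ) (σ : ℤ →₀ ℕ) : Prop :=
  Reaches a b (initState n) σ ∧ ∀ i : ℤ, σ i < a + b

/-- Firing at vertex `i ≥ 1` on the right part: chips sent to vertex `0` are discarded. -/
def rfireAt (a b : ℕ) (i : ℤ) (σ σ' : ℤ →₀ ℕ) : Prop :=
  1 ≤ i ∧ a + b ≤ σ i ∧
  (∀ m : ℤ, m ≤ 0 → σ' m = 0) ∧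
  σ' i = σ i - (a + b) ∧
  σ' (i + 1) = σ (i + 1) + b ∧
  (1 ≤ i - 1 → σ' (i - 1) = σ (i - 1) + a) ∧
  ∀ m : ℤ, 1 ≤ m → m ≠ i - 1 → m ≠ i → m ≠ i + 1 → σ' m = σ m

/-- `Settles a b σ τ`: `τ` is a stable configuration obtained from `σ`
by firings among the vertices `≥ 1`. -/
def Settles (a b : ℕ) (σ τ : ℤ →₀ ℕ) : Prop :=
  Relation.ReflTransGen (fun x y => ∃ i, rfireAt a b i x y) σ τ ∧ ∀ i : ℤ, τ i < a + b

/-- The settlement sequence: `ξ 0` is empty and `ξ (k+1)` is obtained from `ξ k`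
by adding `b` chips at vertex `1` and stabilizing within the vertices `≥ 1`. -/
def SettlementSeq (a b : ℕ) (ξ : ℕ → ℤ →₀ ℕ) : Prop :=
  ξ 0 = 0 ∧ ∀ k : ℕ, Settles a b (ξ k + Finsupp.single 1 b) (ξ (k + 1))

/-- `RLeads a b σ L σ'`: the list `L` of vertices fired in order (right-part firings)
leads from `σ` to `σ'`. -/
inductive RLeads (a b : ℕ) : (ℤ →₀ ℕ) → List ℤ → (ℤ →₀ ℕ) → Prop
  | nil (σ : ℤ →₀ ℕ) : RLeads a b σ [] σ
  | cons {σ τ σ' : ℤ →₀ ℕ} {i : ℤ} {L : List ℤ} :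
      rfireAt a b i σ τ → RLeads a b τ L σ' → RLeads a b σ (i :: L) σ'

/-- The `m`-th tetrahedral number. -/
def Te (m : ℕ) : ℕ := m * (m + 1) * (m + 2) / 6

/-
The weight `t ^ (-m)` with `t = b / a` is balanced for the firing rule, `a t + b t⁻¹ = a + b`,
so every firing preserves the total weight `S_σ(b/a)`. Only a firing at `0` or at `1` moves
weight across the cut between vertices `0` and `1`, and it moves exactly `b t⁻¹ = a` resp.
`a t⁰ = a` of it. Hence `S_{σ^R}(b/a) = a (f₀ - f₁)`, and the left part is the rest of the
initial weight `n`.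
-/

open Finsupp

theorem statePoly_eq_linearCombination (σ : ℤ →₀ ℕ) (t : ℚ) :
    statePoly σ t = linearCombination ℕ (fun m : ℤ => t ^ (-m)) σ := by
  simp only [statePoly, linearCombination_apply, Finsupp.sum, nsmul_eq_mul]

theorem statePolyL_eq_linearCombination (σ : ℤ →₀ ℕ) (t : ℚ) :
    statePolyL σ t = linearCombination ℕ (fun m : ℤ => if m ≤ 0 then t ^ (-m) else 0) σ := by
  simp only [statePolyL, linearCombination_apply, Finsupp.sum, Finset.sum_filter, smul_ite,
    smul_zero, nsmul_eq_mul]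

theorem statePolyR_eq_linearCombination (σ : ℤ →₀ ℕ) (t : ℚ) :
    statePolyR σ t = linearCombination ℕ (fun m : ℤ => if 1 ≤ m then t ^ (-m) else 0) σ := by
  simp only [statePolyR, linearCombination_apply, Finsupp.sum, Finset.sum_filter, smul_ite,
    smul_zero, nsmul_eq_mul]

theorem statePolyL_add_statePolyR (σ : ℤ →₀ ℕ) (t : ℚ) :
    statePolyL σ t + statePolyR σ t = statePoly σ t := by
  have hR : σ.support.filter (fun m => 1 ≤ m) = σ.support.filter (fun m => ¬m ≤ 0) :=
    Finset.filter_congr fun m _ => by omega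
  rw [statePolyL, statePolyR, hR, Finset.sum_filter_add_sum_filter_not, statePoly]

theorem statePolyL_initState (n : ℕ) (t : ℚ) : statePolyL (initState n) t = n := by
  simp [statePolyL_eq_linearCombination, initState]

theorem statePolyR_initState (n : ℕ) (t : ℚ) : statePolyR (initState n) t = 0 := by
  simp [statePolyR_eq_linearCombination, initState]

theorem zpow_neg_sub_one_add_zpow_neg_add_one {a b : ℚ} (ha : a ≠ 0) (hb : b ≠ 0) (i : ℤ) :
    a * (b / a) ^ (-(i - 1)) + b * (b / a) ^ (-(i + 1)) = (a + b) * (b / a) ^ (-i) := by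
  have ht : b / a ≠ 0 := div_ne_zero hb ha
  rw [show -(i - 1) = -i + 1 by ring, show -(i + 1) = -i + -1 by ring, zpow_add₀ ht,
    zpow_add₀ ht, zpow_one, zpow_neg_one, inv_div]
  field_simp
  ring

namespace fireAt

variable {a b : ℕ} {i : ℤ} {σ σ' : ℤ →₀ ℕ}

theorem add_single_eq (h : fireAt a b i σ σ') :
    σ' + single i (a + b) = σ + single (i - 1) a + single (i + 1) b := by
  obtain ⟨hle, hprev, hself, hnext, hrest⟩ := h
  have h₁ : i ≠ i - 1 := by omega
  have h₂ : i + 1 ≠ i - 1 := by omega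
  have h₃ : i + 1 ≠ i := by omega
  ext m
  simp only [Finsupp.add_apply, single_apply]
  by_cases h1 : m = i - 1
  · subst h1; simp [hprev, h₁, h₂]
  by_cases h2 : m = i
  · subst h2
    simp only [hself, ↓reduceIte, if_neg h₁.symm, if_neg h₃, add_zero]
    omega
  by_cases h3 : m = i + 1
  · subst h3; simp [hnext, h₂.symm, h₃.symm]
  simp [hrest m h1 h2 h3, Ne.symm h1, Ne.symm h2, Ne.symm h3]

theorem linearCombination_eq (h : fireAt a b i σ σ') (w : ℤ → ℚ) :
    linearCombination ℕ w σ'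
      = linearCombination ℕ w σ + a * w (i - 1) + b * w (i + 1) - (a + b) * w i := by
  have := congrArg (linearCombination ℕ w) h.add_single_eq
  simp only [map_add, linearCombination_single, nsmul_eq_mul, Nat.cast_add] at this
  linarith

theorem statePoly_eq (h : fireAt a b i σ σ') (ha : 0 < a) (hb : 0 < b) :
    statePoly σ' (b / a) = statePoly σ (b / a) := by
  have := zpow_neg_sub_one_add_zpow_neg_add_one (a := (a : ℚ)) (b := b) (by positivity)
    (by positivity) i
  rw [statePoly_eq_linearCombination, statePoly_eq_linearCombination, h.linearCombination_eq]
  linarith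

theorem statePolyL_eq (h : fireAt a b i σ σ') (ha : 0 < a) (hb : 0 < b) :
    statePolyL σ' (b / a)
      = statePolyL σ (b / a) - a * (([i].count 0 : ℚ) - [i].count 1) := by
  rw [statePolyL_eq_linearCombination, statePolyL_eq_linearCombination, h.linearCombination_eq]
  obtain hi | rfl | rfl | hi : i ≤ -1 ∨ i = 0 ∨ i = 1 ∨ 2 ≤ i := by omega
  · have hbal := zpow_neg_sub_one_add_zpow_neg_add_one (a := (a : ℚ)) (b := b) (by positivity)
      (by positivity) i
    simp only [show i - 1 ≤ 0 by omega, show i + 1 ≤ 0 by omega, show i ≤ 0 by omega, if_true,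
      List.count_singleton, beq_iff_eq, show i ≠ 0 by omega, show i ≠ 1 by omega, if_false]
    linarith
  · have hat : (a : ℚ) * (b / a) = b := mul_div_cancel₀ _ (by positivity)
    norm_num
    linarith
  · simp
  · simp [show ¬i - 1 ≤ 0 by omega, show ¬i + 1 ≤ 0 by omega, show ¬i ≤ 0 by omega,
      show i ≠ 0 by omega, show i ≠ 1 by omega]

theorem statePolyR_eq (h : fireAt a b i σ σ') (ha : 0 < a) (hb : 0 < b) :
    statePolyR σ' (b / a)
      = statePolyR σ (b / a) + a * (([i].count 0 : ℚ) - [i].count 1) := by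
  have hL := h.statePolyL_eq ha hb
  have hσ := statePolyL_add_statePolyR σ (b / a)
  have hσ' := statePolyL_add_statePolyR σ' (b / a)
  rw [h.statePoly_eq ha hb] at hσ'
  linarith

end fireAt

namespace Leads

theorem map_eq_add_count_sub_count {a b : ℕ} {σ σ' : ℤ →₀ ℕ} {L : List ℤ}
    (f : (ℤ →₀ ℕ) → ℚ) (c : ℚ) (x y : ℤ)
    (hf : ∀ i σ σ', fireAt a b i σ σ' → f σ' = f σ + c * (([i].count x : ℚ) - [i].count y))
    (h : Leads a b σ L σ') :
    f σ' = f σ + c * ((L.count x : ℚ) - L.count y) := by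
  induction h with
  | nil => simp
  | @cons σ τ σ' i L hfire _ ih =>
    have hcount (z : ℤ) : ((i :: L).count z : ℚ) = [i].count z + L.count z := by
      rw [← Nat.cast_add, ← List.count_append, List.singleton_append]
    rw [ih, hf i σ τ hfire, hcount, hcount]
    ring

end Leads

/-- `S_{σ^L}(b/a) = n - a(f₀ - f₁)` and `S_{σ^R}(b/a) = a(f₀ - f₁)`;
in particular both values are integers. -/
theorem stmt3 (a b : ℕ) (ha : 0 < a) (hb : 0 < b) (n : ℕ) (σ : ℤ →₀ ℕ) (L : List ℤ)
    (h : Leads a b (initState n) L σ) :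
    statePolyL σ ((b : ℚ) / a)
      = (n : ℚ) - (a : ℚ) * ((L.count 0 : ℚ) - (L.count 1 : ℚ)) ∧
    statePolyR σ ((b : ℚ) / a)
      = (a : ℚ) * ((L.count 0 : ℚ) - (L.count 1 : ℚ)) ∧
    (∃ z : ℤ, statePolyL σ ((b : ℚ) / a) = z) ∧
    (∃ z : ℤ, statePolyR σ ((b : ℚ) / a) = z) := by
  have hL := h.map_eq_add_count_sub_count (statePolyL · (b / a)) (-a) 0 1
    fun _ _ _ hfire => by rw [hfire.statePolyL_eq ha hb]; ring
  have hR := h.map_eq_add_count_sub_count (statePolyR · (b / a)) a 0 1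
    fun _ _ _ hfire => hfire.statePolyR_eq ha hb
  rw [statePolyL_initState, neg_mul, ← sub_eq_add_neg] at hL
  rw [statePolyR_initState, zero_add] at hR
  refine ⟨hL, hR, ⟨n - a * ((L.count 0 : ℤ) - L.count 1), ?_⟩,
    ⟨a * ((L.count 0 : ℤ) - L.count 1), ?_⟩⟩
  · rw [hL]; push_cast; ring
  · rw [hR]; push_cast; ring
end

section
/- If a ≠ b, then for any state σ reachable from the initial state, the numbers of firings f_0(σ) at the origin and f_1(σ) at vertex 1 are uniquely determined by σ, independent of the order of firings. -/
private lemma leads_count {a b : ℕ} {σ₀ σ : ℤ →₀ ℕ} {L : List ℤ}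
    (h : Leads a b σ₀ L σ) (m : ℤ) :
    (σ m : ℤ) = (σ₀ m : ℤ) + a * L.count (m+1) + b * L.count (m-1) - (a+b) * L.count m := by
  induction h with
  | nil => simp
  | @cons σ₁ τ σ' i L hf hl ih =>
    obtain ⟨hle, e1, e2, e3, e4⟩ := hf
    have c2 : (τ i : ℤ) = (σ₁ i : ℤ) - (a+b) := by
      rw [e2]; push_cast [hle]; ring
    have c1 : (τ (i-1) : ℤ) = (σ₁ (i-1) : ℤ) + a := by rw [e1]; push_cast; ring
    have c3 : (τ (i+1) : ℤ) = (σ₁ (i+1) : ℤ) + b := by rw [e3]; push_cast; ring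
    rcases eq_or_ne m (i-1) with rfl | hm1
    · rw [ih, c1]
      simp only [List.count_cons, beq_iff_eq]
      push_cast
      split_ifs <;> first | ring1 | (exfalso; omega)
    · rcases eq_or_ne m i with rfl | hm2
      · rw [ih, c2]
        simp only [List.count_cons, beq_iff_eq]
        push_cast
        split_ifs <;> first | ring1 | (exfalso; omega)
      · rcases eq_or_ne m (i+1) with rfl | hm3
        · rw [ih, c3]
          simp only [List.count_cons, beq_iff_eq]
          push_cast
          split_ifs <;> first | ring1 | (exfalso; omega)
        · rw [ih, e4 m hm1 hm2 hm3]
          simp only [List.count_cons, beq_iff_eq]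
          push_cast
          split_ifs <;> first | ring1 | (exfalso; omega)

private lemma exists_bound (L : List ℤ) : ∃ N : ℤ, ∀ x ∈ L, x < N := by
  induction L with
  | nil => exact ⟨0, by simp⟩
  | cons a L ih =>
    obtain ⟨N, hN⟩ := ih
    refine ⟨max N (a+1), fun x hx => ?_⟩
    rcases List.mem_cons.mp hx with rfl | hx
    · exact lt_of_lt_of_le (by omega) (le_max_right _ _)
    · exact lt_of_lt_of_le (hN x hx) (le_max_left _ _)

/-- If `a ≠ b`, the firing counts at vertices `0` and `1` are
uniquely determined by the reached state `σ`, independent of the firing order. -/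
theorem stmt4 (a b : ℕ) (ha : 0 < a) (hb : 0 < b) (hab : a ≠ b) (n : ℕ)
    (σ : ℤ →₀ ℕ) (L₁ L₂ : List ℤ)
    (h₁ : Leads a b (initState n) L₁ σ) (h₂ : Leads a b (initState n) L₂ σ) :
    L₁.count 0 = L₂.count 0 ∧ L₁.count 1 = L₂.count 1 := by
  have key₁ := leads_count h₁
  have key₂ := leads_count h₂
  set g : ℤ → ℤ := fun m => (L₁.count m : ℤ) - (L₂.count m : ℤ) with hg
  have hrec : ∀ m : ℤ, (a:ℤ) * g (m+1) + b * g (m-1) = (a+b) * g m := by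
    intro m
    have := (key₁ m).symm.trans (key₂ m)
    simp only [hg]
    push_cast at this ⊢
    linarith
  obtain ⟨N, hN⟩ := exists_bound (L₁ ++ L₂)
  have hg0 : ∀ m : ℤ, N ≤ m → g m = 0 := by
    intro m hm
    have h1 : L₁.count m = 0 := List.count_eq_zero.mpr (fun h => absurd (hN m (List.mem_append.mpr (Or.inl h))) (by omega))
    have h2 : L₂.count m = 0 := List.count_eq_zero.mpr (fun h => absurd (hN m (List.mem_append.mpr (Or.inr h))) (by omega))
    simp [hg, h1, h2]
  -- h m := g (m+1) - g m satisfies a * h m = b * h (m-1)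
  have hstep : ∀ m : ℤ, g (m+1) - g m = 0 → g m - g (m-1) = 0 := by
    intro m hm
    have hb' : (b:ℤ) ≠ 0 := by exact_mod_cast hb.ne'
    have key : (b:ℤ) * (g m - g (m-1)) = (a:ℤ) * (g (m+1) - g m) := by
      linear_combination - hrec m
    rw [hm, mul_zero] at key
    exact (mul_eq_zero.mp key).resolve_left hb'
  have hzero : ∀ m : ℤ, g (m+1) - g m = 0 := by
    have aux : ∀ k : ℕ, ∀ m : ℤ, N - m ≤ k → g (m+1) - g m = 0 := by
      intro k
      induction k with
      | zero => intro m hm; rw [hg0 (m+1) (by omega), hg0 m (by omega)]; ring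
      | succ k ih =>
        intro m hm
        by_cases h : N ≤ m
        · rw [hg0 (m+1) (by omega), hg0 m (by omega)]; ring
        · have := hstep (m+1) (ih (m+1) (by omega))
          simpa using this
    intro m
    exact aux (N - m).toNat m (by omega)
  have hgall : ∀ m : ℤ, g m = 0 := by
    have aux : ∀ k : ℕ, ∀ m : ℤ, N ≤ m + k → g m = 0 := by
      intro k
      induction k with
      | zero => intro m hm; exact hg0 m (by simpa using hm)
      | succ k ih =>
        intro m hm
        have h1 := hzero m
        have h2 := ih (m+1) (by push_cast at hm ⊢; omega)
        omega
    intro m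
    exact aux (N - m).toNat m (by omega)
  constructor
  · have := hgall 0; simp only [hg] at this; omega
  · have := hgall 1; simp only [hg] at this; omega
end

section
/- Let d = gcd(a,b) > 1 and n = pd + q with 0 ≤ q < d. If a firing sequence in the (a/d)-(b/d) game starting with p chips at the origin leads to state σ = (s_m), then the same sequence of vertex firings is legal in the a-b game starting with n chips and leads to the state σ' with s'_0 = d·s_0 + q and s'_m = d·s_m for m ≠ 0. -/
/-
Firing is linear in the configuration: multiplying every chip count by `d` turns a legal
`a'`-`b'` firing into a legal `(d a')`-`(d b')` firing, and adding a fixed configuration of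
bystander chips keeps every firing legal. With `a = d a'`, `b = d b'` and the `q` leftover
chips parked at the origin, the `a`-`b` game from `n = p d + q` chips therefore replays the
`a'`-`b'` game from `p` chips.
-/

section Firing

variable {a b : ℕ} {i : ℤ} {σ τ : ℤ →₀ ℕ}

theorem fireAt.smul (d : ℕ) (h : fireAt a b i σ τ) :
    fireAt (d * a) (d * b) i (d • σ) (d • τ) := by
  obtain ⟨hle, hleft, hself, hright, hrest⟩ := h
  simp only [fireAt, Finsupp.smul_apply, smul_eq_mul, hleft, hself, hright]
  refine ⟨by rw [← mul_add]; exact Nat.mul_le_mul_left d hle, by ring,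
    by rw [Nat.mul_sub, mul_add], by ring, fun m h₁ h₂ h₃ => by rw [hrest m h₁ h₂ h₃]⟩

theorem fireAt.add_right (ρ : ℤ →₀ ℕ) (h : fireAt a b i σ τ) :
    fireAt a b i (σ + ρ) (τ + ρ) := by
  obtain ⟨hle, hleft, hself, hright, hrest⟩ := h
  simp only [fireAt, Finsupp.add_apply, hleft, hself, hright]
  refine ⟨le_add_right hle, by ring, by omega, by ring,
    fun m h₁ h₂ h₃ => by rw [hrest m h₁ h₂ h₃]⟩

end Firing

section Leads

variable {a b : ℕ} {σ τ : ℤ →₀ ℕ} {L : List ℤ}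

theorem Leads.smul (d : ℕ) (h : Leads a b σ L τ) :
    Leads (d * a) (d * b) (d • σ) L (d • τ) := by
  induction h with
  | nil σ => exact .nil _
  | cons hfire _ ih => exact .cons (hfire.smul d) ih

theorem Leads.add_right (ρ : ℤ →₀ ℕ) (h : Leads a b σ L τ) :
    Leads a b (σ + ρ) L (τ + ρ) := by
  induction h with
  | nil σ => exact .nil _
  | cons hfire _ ih => exact .cons (hfire.add_right ρ) ih

end Leads

theorem stmt7_general (a b : ℕ)
    (n p q : ℕ) (hn : n = p * Nat.gcd a b + q)
    (σ : ℤ →₀ ℕ) (L : List ℤ)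
    (h : Leads (a / Nat.gcd a b) (b / Nat.gcd a b) (initState p) L σ) :
    ∃ σ' : ℤ →₀ ℕ, Leads a b (initState n) L σ' ∧
      σ' 0 = Nat.gcd a b * σ 0 + q ∧
      ∀ m : ℤ, m ≠ 0 → σ' m = Nat.gcd a b * σ m := by
  set d := Nat.gcd a b
  have hinit : initState n = d • initState p + Finsupp.single 0 q := by
    rw [initState, initState, Finsupp.smul_single, ← Finsupp.single_add, smul_eq_mul, hn,
      mul_comm]
  have hlift := (h.smul d).add_right (Finsupp.single 0 q)
  rw [Nat.mul_div_cancel' (Nat.gcd_dvd_left a b), Nat.mul_div_cancel' (Nat.gcd_dvd_right a b),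
    ← hinit] at hlift
  refine ⟨d • σ + Finsupp.single 0 q, hlift, by simp, fun m hm => ?_⟩
  simp [Finsupp.single_eq_of_ne' hm.symm]

/-- With `d = gcd(a,b) > 1` and `n = p·d + q`, `0 ≤ q < d`, any firing
sequence legal in the `(a/d)-(b/d)` game from `p` chips, reaching `σ`, is legal in
the `a-b` game from `n` chips and reaches the state with `d·s₀ + q` chips at the
origin and `d·s_m` chips at each other vertex `m`. -/
theorem stmt7 (a b : ℕ) (ha : 0 < a) (hb : 0 < b) (hd : 1 < Nat.gcd a b)
    (n p q : ℕ) (hn : n = p * Nat.gcd a b + q) (hq : q < Nat.gcd a b)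
    (σ : ℤ →₀ ℕ) (L : List ℤ)
    (h : Leads (a / Nat.gcd a b) (b / Nat.gcd a b) (initState p) L σ) :
    ∃ σ' : ℤ →₀ ℕ, Leads a b (initState n) L σ' ∧
      σ' 0 = Nat.gcd a b * σ 0 + q ∧
      ∀ m : ℤ, m ≠ 0 → σ' m = Nat.gcd a b * σ m :=
  stmt7_general a b n p q hn σ L h
end

section
/- In the 1-1 chip-firing game starting with n chips at the origin, the final state is: 1 chip at each of the vertices −k,…,−1 and 1,…,k and 0 at the origin if n = 2k; and 1 chip at each of the vertices −k,…,0 and 1,…,k if n = 2k+1. -/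
set_option maxHeartbeats 4000000

/-- The result of firing at `i` (1-1 game), as a function. -/
noncomputable def fireFun (i : ℤ) (σ : ℤ →₀ ℕ) : ℤ →₀ ℕ :=
  Finsupp.onFinset (insert (i-1) (insert (i+1) σ.support))
    (fun m => if m = i then σ i - 2 else if m = i - 1 then σ (i-1) + 1
      else if m = i + 1 then σ (i+1) + 1 else σ m)
    (by
      intro m hm
      simp only [Finset.mem_insert, Finsupp.mem_support_iff]
      beta_reduce at hm
      split_ifs at hm with h1 h2 h3
      · subst h1; right; right; omega
      · left; exact h2
      · right; left; exact h3
      · right; right; exact hm)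

theorem fireFun_apply (i : ℤ) (σ : ℤ →₀ ℕ) (m : ℤ) :
    fireFun i σ m = if m = i then σ i - 2 else if m = i - 1 then σ (i-1) + 1
      else if m = i + 1 then σ (i+1) + 1 else σ m := rfl

theorem fireAt_eq {i : ℤ} {σ τ : ℤ →₀ ℕ} (h : fireAt 1 1 i σ τ) : τ = fireFun i σ := by
  obtain ⟨h1, h2, h3, h4, h5⟩ := h
  ext m
  rw [fireFun_apply]
  split_ifs with e1 e2 e3
  · subst e1; simpa using h3
  · subst e2; simpa using h2
  · subst e3; simpa using h4
  · exact h5 m e2 e1 e3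

theorem fire_step {i : ℤ} {σ : ℤ →₀ ℕ} (h : 2 ≤ σ i) : fireAt 1 1 i σ (fireFun i σ) := by
  refine ⟨by omega, ?_, ?_, ?_, ?_⟩
  · rw [fireFun_apply]; split_ifs <;> omega
  · rw [fireFun_apply]; split_ifs <;> omega
  · rw [fireFun_apply]; split_ifs <;> omega
  · intro m hm1 hm2 hm3; rw [fireFun_apply]; split_ifs <;> omega

/-- single-step relation of the 1-1 game -/
def Step (σ τ : ℤ →₀ ℕ) : Prop := ∃ i, fireAt 1 1 i σ τ

theorem fireFun_ge {i j : ℤ} {σ : ℤ →₀ ℕ} (hij : i ≠ j) (hj : 2 ≤ σ j) :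
    2 ≤ fireFun i σ j := by
  rw [fireFun_apply]
  split_ifs with ha hb hc
  · omega
  · subst hb; omega
  · subst hc; omega
  · omega

theorem commuteFF (i j : ℤ) (σ : ℤ →₀ ℕ) (hi : 2 ≤ σ i) (hj : 2 ≤ σ j) (hij : i ≠ j) :
    fireFun j (fireFun i σ) = fireFun i (fireFun j σ) := by
  have h5 : j = i+1 ∨ j = i-1 ∨ j = i+2 ∨ j = i-2 ∨
      (j ≠ i+1 ∧ j ≠ i-1 ∧ j ≠ i+2 ∧ j ≠ i-2) := by omega
  ext m
  rcases h5 with h|h|h|h|⟨h1,h2,h3,h4⟩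
  · subst h
    simp only [fireFun_apply, show i+1-1 = i from by ring, show i+1+1 = i+2 from by ring]
    split_ifs <;> omega
  · subst h
    simp only [fireFun_apply, show i-1-1 = i-2 from by ring, show i-1+1 = i from by ring]
    split_ifs <;> omega
  · subst h
    simp only [fireFun_apply, show i+2-1 = i+1 from by ring, show i+2+1 = i+3 from by ring]
    split_ifs <;> omega
  · subst h
    simp only [fireFun_apply, show i-2-1 = i-3 from by ring, show i-2+1 = i-1 from by ring]
    split_ifs <;> omega
  · simp only [fireFun_apply]
    split_ifs <;> omega

theorem diamond : ∀ σ τ₁ τ₂, Step σ τ₁ → Step σ τ₂ →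
    ∃ ρ, Relation.ReflGen Step τ₁ ρ ∧ Relation.ReflTransGen Step τ₂ ρ := by
  rintro σ τ₁ τ₂ ⟨i, hi⟩ ⟨j, hj⟩
  have hi2 : 2 ≤ σ i := by have := hi.1; omega
  have hj2 : 2 ≤ σ j := by have := hj.1; omega
  have e1 := fireAt_eq hi
  have e2 := fireAt_eq hj
  by_cases hij : i = j
  · subst hij
    exact ⟨τ₁, Relation.ReflGen.refl, by rw [e1, e2]⟩
  · refine ⟨fireFun j (fireFun i σ), ?_, ?_⟩
    · refine Relation.ReflGen.single ⟨j, ?_⟩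
      rw [e1]
      exact fire_step (fireFun_ge (by omega) hj2)
    · refine Relation.ReflTransGen.single ⟨i, ?_⟩
      rw [e2, commuteFF i j σ hi2 hj2 hij]
      exact fire_step (fireFun_ge (fun h => hij h.symm) hi2)

theorem step_add {σ τ γ : ℤ →₀ ℕ} (h : Step σ τ) : Step (σ + γ) (τ + γ) := by
  obtain ⟨i, h1, h2, h3, h4, h5⟩ := h
  refine ⟨i, ?_, ?_, ?_, ?_, ?_⟩
  · simp only [Finsupp.add_apply]; omega
  · simp only [Finsupp.add_apply]; omega
  · simp only [Finsupp.add_apply]; omega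
  · simp only [Finsupp.add_apply]; omega
  · intro m hm1 hm2 hm3; simp only [Finsupp.add_apply]; rw [h5 m hm1 hm2 hm3]

theorem reaches_add {σ τ : ℤ →₀ ℕ} (γ : ℤ →₀ ℕ)
    (h : Relation.ReflTransGen Step σ τ) :
    Relation.ReflTransGen Step (σ + γ) (τ + γ) := by
  induction h with
  | refl => exact Relation.ReflTransGen.refl
  | tail _ hbc ih => exact ih.tail (step_add hbc)

/-- Reflection through the origin. -/
noncomputable def negF (σ : ℤ →₀ ℕ) : ℤ →₀ ℕ :=
  Finsupp.onFinset (σ.support.image (fun x => -x)) (fun m => σ (-m))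
    (by
      intro m hm
      simp only [Finset.mem_image, Finsupp.mem_support_iff]
      exact ⟨-m, hm, by ring⟩)

theorem negF_apply (σ : ℤ →₀ ℕ) (m : ℤ) : negF σ m = σ (-m) := rfl

theorem step_neg {σ τ : ℤ →₀ ℕ} (h : Step σ τ) : Step (negF σ) (negF τ) := by
  obtain ⟨i, h1, h2, h3, h4, h5⟩ := h
  refine ⟨-i, ?_, ?_, ?_, ?_, ?_⟩
  · simpa [negF_apply] using h1
  · rw [negF_apply, negF_apply, show -(-i-1) = i+1 from by ring]; exact h4
  · rw [negF_apply, negF_apply, neg_neg]; exact h3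
  · rw [negF_apply, negF_apply, show -(-i+1) = i-1 from by ring]; exact h2
  · intro m hm1 hm2 hm3
    rw [negF_apply, negF_apply]
    exact h5 (-m) (by omega) (by omega) (by omega)

theorem reaches_neg {σ τ : ℤ →₀ ℕ} (h : Relation.ReflTransGen Step σ τ) :
    Relation.ReflTransGen Step (negF σ) (negF τ) := by
  induction h with
  | refl => exact Relation.ReflTransGen.refl
  | tail _ hbc ih => exact ih.tail (step_neg hbc)

/-- Indicator of the interval `[a,b]`. -/
noncomputable def ind (a b : ℤ) : ℤ →₀ ℕ :=
  Finsupp.onFinset (Finset.Icc a b) (fun m => if a ≤ m ∧ m ≤ b then 1 else 0)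
    (by
      intro m hm
      beta_reduce at hm
      rw [Finset.mem_Icc]
      split_ifs at hm with h
      · exact h
      · omega)

theorem ind_apply (a b m : ℤ) : ind a b m = if a ≤ m ∧ m ≤ b then 1 else 0 := rfl

theorem wave_right : ∀ (d : ℕ) (j : ℤ),
    Relation.ReflTransGen Step (Finsupp.single j 2 + ind (j+1) (j+d))
      (Finsupp.single (j-1) 1 + ind j (j+d-1) + Finsupp.single (j+d+1) 1) := by
  intro d
  induction d with
  | zero =>
    intro j
    refine Relation.ReflTransGen.single ⟨j, ?_⟩
    have h2 : 2 ≤ ((Finsupp.single j 2 + ind (j+1) (j+(0:ℕ)) : ℤ →₀ ℕ)) j := by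
      simp only [Finsupp.add_apply, Finsupp.single_apply, ind_apply]
      split_ifs <;> omega
    have := fire_step h2
    have e : fireFun j (Finsupp.single j 2 + ind (j+1) (j+(0:ℕ)))
        = Finsupp.single (j-1) 1 + ind j (j+(0:ℕ)-1) + Finsupp.single (j+(0:ℕ)+1) 1 := by
      ext m
      simp only [fireFun_apply, Finsupp.add_apply, Finsupp.single_apply, ind_apply]
      split_ifs <;> omega
    rwa [e] at this
  | succ d ih =>
    intro j
    have h2 : 2 ≤ ((Finsupp.single j 2 + ind (j+1) (j+(d+1:ℕ)) : ℤ →₀ ℕ)) j := by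
      simp only [Finsupp.add_apply, Finsupp.single_apply, ind_apply]
      split_ifs <;> omega
    refine Relation.ReflTransGen.head ⟨j, fire_step h2⟩ ?_
    have e : fireFun j (Finsupp.single j 2 + ind (j+1) (j+(d+1:ℕ)))
        = (Finsupp.single (j+1) 2 + ind (j+1+1) (j+1+d)) + Finsupp.single (j-1) 1 := by
      ext m
      simp only [fireFun_apply, Finsupp.add_apply, Finsupp.single_apply, ind_apply]
      simp only [Nat.cast_add, Nat.cast_one, Nat.cast_zero, Nat.cast_ofNat]
      split_ifs <;> omega
    rw [e]
    have hw := reaches_add (Finsupp.single (j-1) 1) (ih (j+1))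
    refine hw.trans ?_
    have e2 : (Finsupp.single (j+1-1) 1 + ind (j+1) (j+1+d-1) + Finsupp.single (j+1+d+1) 1)
        + Finsupp.single (j-1) 1
        = Finsupp.single (j-1) 1 + ind j (j+(d+1:ℕ)-1) + Finsupp.single (j+(d+1:ℕ)+1) 1 := by
      ext m
      simp only [Finsupp.add_apply, Finsupp.single_apply, ind_apply]
      simp only [Nat.cast_add, Nat.cast_one, Nat.cast_zero, Nat.cast_ofNat]
      split_ifs <;> omega
    rw [e2]

theorem cascade : ∀ (k : ℕ),
    Relation.ReflTransGen Step
      (Finsupp.single 0 2 + (ind 1 k + ind (-(k:ℤ)) (-1)))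
      (ind 1 ((k:ℤ)+1) + ind (-((k:ℤ)+1)) (-1)) := by
  intro k
  induction k with
  | zero =>
    refine Relation.ReflTransGen.single ⟨0, ?_⟩
    have h2 : 2 ≤ ((Finsupp.single (0:ℤ) 2 + (ind 1 (0:ℕ) + ind (-((0:ℕ):ℤ)) (-1)) : ℤ →₀ ℕ)) 0 := by
      simp only [Finsupp.add_apply, Finsupp.single_apply, ind_apply]
      split_ifs <;> omega
    have := fire_step h2
    have e : fireFun 0 (Finsupp.single (0:ℤ) 2 + (ind 1 (0:ℕ) + ind (-((0:ℕ):ℤ)) (-1)))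
        = ind 1 (((0:ℕ):ℤ)+1) + ind (-(((0:ℕ):ℤ)+1)) (-1) := by
      ext m
      simp only [fireFun_apply, Finsupp.add_apply, Finsupp.single_apply, ind_apply]
      simp only [Nat.cast_add, Nat.cast_one, Nat.cast_zero, Nat.cast_ofNat]
      split_ifs <;> omega
    rwa [e] at this
  | succ k ih =>
    have h2 : 2 ≤ ((Finsupp.single (0:ℤ) 2 + (ind 1 (k+1:ℕ) + ind (-((k+1:ℕ):ℤ)) (-1)) : ℤ →₀ ℕ)) 0 := by
      simp only [Finsupp.add_apply, Finsupp.single_apply, ind_apply]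
      split_ifs <;> omega
    refine Relation.ReflTransGen.head ⟨0, fire_step h2⟩ ?_
    -- state after firing the origin
    have e1 : fireFun 0 (Finsupp.single (0:ℤ) 2 + (ind 1 (k+1:ℕ) + ind (-((k+1:ℕ):ℤ)) (-1)))
        = (Finsupp.single (1:ℤ) 2 + ind (1+1) (1+(k:ℤ)))
          + (Finsupp.single (-1:ℤ) 1 + ind (-((k:ℤ)+1)) (-1)) := by
      ext m
      simp only [fireFun_apply, Finsupp.add_apply, Finsupp.single_apply, ind_apply]
      simp only [Nat.cast_add, Nat.cast_one, Nat.cast_zero, Nat.cast_ofNat]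
      split_ifs <;> omega
    rw [e1]
    -- right wave
    have hw1 := reaches_add (Finsupp.single (-1:ℤ) 1 + ind (-((k:ℤ)+1)) (-1)) (wave_right k 1)
    refine hw1.trans ?_
    -- left wave, by reflection
    have hw2' := reaches_neg (wave_right k 1)
    have eL : negF (Finsupp.single (1:ℤ) 2 + ind (1+1) (1+(k:ℤ)))
        = Finsupp.single (-1:ℤ) 2 + ind (-((k:ℤ)+1)) (-2) := by
      ext m
      simp only [negF_apply, Finsupp.add_apply, Finsupp.single_apply, ind_apply]
      split_ifs <;> omega
    have eR : negF (Finsupp.single (1-1:ℤ) 1 + ind 1 (1+(k:ℤ)-1) + Finsupp.single (1+(k:ℤ)+1) 1)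
        = Finsupp.single (0:ℤ) 1 + ind (-(k:ℤ)) (-1) + Finsupp.single (-((k:ℤ)+2)) 1 := by
      ext m
      simp only [negF_apply, Finsupp.add_apply, Finsupp.single_apply, ind_apply]
      split_ifs <;> omega
    rw [eL, eR] at hw2'
    have e2 : (Finsupp.single (1-1:ℤ) 1 + ind 1 (1+(k:ℤ)-1) + Finsupp.single (1+(k:ℤ)+1) 1)
        + (Finsupp.single (-1:ℤ) 1 + ind (-((k:ℤ)+1)) (-1))
        = (Finsupp.single (-1:ℤ) 2 + ind (-((k:ℤ)+1)) (-2))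
          + (Finsupp.single (0:ℤ) 1 + ind 1 (k:ℤ) + Finsupp.single ((k:ℤ)+2) 1) := by
      ext m
      simp only [Finsupp.add_apply, Finsupp.single_apply, ind_apply]
      split_ifs <;> omega
    rw [e2]
    have hw2 := reaches_add (Finsupp.single (0:ℤ) 1 + ind 1 (k:ℤ) + Finsupp.single ((k:ℤ)+2) 1) hw2'
    refine hw2.trans ?_
    have e3 : (Finsupp.single (0:ℤ) 1 + ind (-(k:ℤ)) (-1) + Finsupp.single (-((k:ℤ)+2)) 1)
        + (Finsupp.single (0:ℤ) 1 + ind 1 (k:ℤ) + Finsupp.single ((k:ℤ)+2) 1)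
        = (Finsupp.single (0:ℤ) 2 + (ind 1 (k:ℕ) + ind (-((k:ℕ):ℤ)) (-1)))
          + (Finsupp.single (-((k:ℤ)+2)) 1 + Finsupp.single ((k:ℤ)+2) 1) := by
      ext m
      simp only [Finsupp.add_apply, Finsupp.single_apply, ind_apply]
      split_ifs <;> omega
    rw [e3]
    have hw3 := reaches_add (Finsupp.single (-((k:ℤ)+2)) 1 + Finsupp.single ((k:ℤ)+2) 1) ih
    refine hw3.trans ?_
    have e4 : (ind 1 ((k:ℤ)+1) + ind (-((k:ℤ)+1)) (-1))
        + (Finsupp.single (-((k:ℤ)+2)) 1 + Finsupp.single ((k:ℤ)+2) 1)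
        = ind 1 (((k+1:ℕ):ℤ)+1) + ind (-(((k+1:ℕ):ℤ)+1)) (-1) := by
      ext m
      simp only [Finsupp.add_apply, Finsupp.single_apply, ind_apply]
      simp only [Nat.cast_add, Nat.cast_one, Nat.cast_zero, Nat.cast_ofNat]
      split_ifs <;> omega
    rw [e4]

/-- The claimed final state. -/
noncomputable def target (n : ℕ) : ℤ →₀ ℕ :=
  Finsupp.single 0 (n % 2) + (ind 1 (n/2 : ℕ) + ind (-((n/2 : ℕ):ℤ)) (-1))

theorem reach_target : ∀ n : ℕ, Relation.ReflTransGen Step (initState n) (target n) := by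
  intro n
  induction n with
  | zero =>
    have e : initState 0 = target 0 := by
      ext m
      simp only [initState, target, Finsupp.add_apply, Finsupp.single_apply, ind_apply]
      split_ifs <;> omega
    rw [e]
  | succ n ih =>
    have e : initState (n+1) = initState n + Finsupp.single 0 1 := by
      ext m
      simp only [initState, Finsupp.add_apply, Finsupp.single_apply]
      split_ifs <;> omega
    rw [e]
    have h1 := reaches_add (Finsupp.single 0 1) ih
    refine h1.trans ?_
    rcases Nat.even_or_odd n with he | ho
    · have hmod : n % 2 = 0 := Nat.even_iff.mp he
      have e2 : target n + Finsupp.single 0 1 = target (n+1) := by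
        have hm1 : (n+1) % 2 = 1 := by omega
        have hd : (n+1) / 2 = n / 2 := by omega
        ext m
        simp only [target, Finsupp.add_apply, Finsupp.single_apply, ind_apply, hmod, hm1, hd]
        split_ifs <;> omega
      rw [e2]
    · have hmod : n % 2 = 1 := Nat.odd_iff.mp ho
      have e2 : target n + Finsupp.single 0 1
          = Finsupp.single 0 2 + (ind 1 (n/2 : ℕ) + ind (-((n/2 : ℕ):ℤ)) (-1)) := by
        ext m
        simp only [target, Finsupp.add_apply, Finsupp.single_apply, ind_apply, hmod]
        split_ifs <;> omega
      rw [e2]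
      refine (cascade (n/2)).trans ?_
      have e3 : ind 1 (((n/2:ℕ):ℤ)+1) + ind (-(((n/2:ℕ):ℤ)+1)) (-1) = target (n+1) := by
        have hm1 : (n+1) % 2 = 0 := by omega
        have hd : (n+1) / 2 = n / 2 + 1 := by omega
        ext m
        simp only [target, Finsupp.add_apply, Finsupp.single_apply, ind_apply, hm1, hd]
        simp only [Nat.cast_add, Nat.cast_one, Nat.cast_zero, Nat.cast_ofNat]
        split_ifs <;> omega
      rw [e3]

theorem stable_reach {σ τ : ℤ →₀ ℕ} (hσ : ∀ i : ℤ, σ i < 2)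
    (h : Relation.ReflTransGen Step σ τ) : τ = σ := by
  rcases (Relation.ReflTransGen.cases_head h) with he | ⟨c, ⟨i, hc⟩, _⟩
  · exact he.symm
  · exfalso; have := hc.1; have := hσ i; omega

/-- In the 1-1 game starting with `n` chips, the final state has one
chip on each of the vertices `-k,…,-1,1,…,k` (and none at the origin) if `n = 2k`,
and one chip on each of `-k,…,0,…,k` if `n = 2k+1`. -/
theorem stmt8 (n : ℕ) (σ : ℤ →₀ ℕ)
    (hreach : Reaches 1 1 (initState n) σ) (hstable : ∀ i : ℤ, σ i < 2) :
    ∀ m : ℤ, σ m = if (m ≠ 0 ∨ n % 2 = 1) ∧ |m| ≤ (n / 2 : ℕ) then 1 else 0 := by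
  have hreach' : Relation.ReflTransGen Step (initState n) σ := hreach
  have htgt := reach_target n
  obtain ⟨ρ, h1, h2⟩ := Relation.church_rosser diamond hreach' htgt
  have htgtstable : ∀ i : ℤ, target n i < 2 := by
    intro i
    simp only [target, Finsupp.add_apply, Finsupp.single_apply, ind_apply]
    split_ifs <;> omega
  have hρ1 : ρ = σ := stable_reach hstable h1
  have hρ2 : ρ = target n := stable_reach htgtstable h2
  have hσt : σ = target n := by rw [← hρ1, hρ2]
  intro m
  rw [hσt]
  simp only [target, Finsupp.add_apply, Finsupp.single_apply, ind_apply, abs_le]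
  split_ifs <;> omega
end

section
/- Let ξ_k = .s_1 s_2 … s_ℓ be a settlement (stable right part) in the a-b game, and let j be the smallest index i with s_i < a (with j = ℓ+1 if all s_i ≥ a, setting s_{ℓ+1} = 0). Then the next settlement ξ_{k+1} obtained by adding b chips at vertex 1 and stabilizing the right part is: if j = 1, ξ_{k+1} replaces s_1 by s_1 + b and keeps all other digits; if j > 1, ξ_{k+1} replaces s_{j−1} by s_{j−1} − a and s_j by s_j + b, keeping all other digits. -/
/-- Intermediate state in the stabilization: after firing vertices `1, …, i`. -/
noncomputable def stc (a b : ℕ) (c : ℤ →₀ ℕ) (i : ℤ) : ℤ →₀ ℕ :=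
  c + Finsupp.single (i + 1) b - Finsupp.single i a

lemma stc_eval (a b : ℕ) (c : ℤ →₀ ℕ) (i m : ℤ) :
    (stc a b c i) m = if m = i then c m - a else if m = i + 1 then c m + b else c m := by
  unfold stc
  rw [Finsupp.tsub_apply, Finsupp.add_apply, Finsupp.single_apply, Finsupp.single_apply]
  split_ifs <;> omega

lemma xi_zero (a b : ℕ) (ξ : ℕ → ℤ →₀ ℕ) (hξ : SettlementSeq a b ξ) :
    ∀ k : ℕ, ∀ m : ℤ, m ≤ 0 → ξ k m = 0 := by
  intro k
  induction k with
  | zero => intro m hm; rw [hξ.1]; simp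
  | succ k ih =>
    intro m hm
    obtain ⟨hreach, _⟩ := hξ.2 k
    rcases Relation.ReflTransGen.cases_tail hreach with heq | ⟨mid, _, v, hf⟩
    · rw [heq, Finsupp.add_apply, ih m hm, Finsupp.single_apply, if_neg (by omega)]
      omega
    · exact hf.2.2.1 m hm

lemma chain (a b : ℕ) (c : ℤ →₀ ℕ)
    (hc0 : ∀ m : ℤ, m ≤ 0 → c m = 0) (hcs : ∀ m : ℤ, c m < a + b)
    (j : ℤ) (hj1 : 1 ≤ j) (hjlt : c j < a)
    (hjmin : ∀ i : ℤ, 1 ≤ i → i < j → a ≤ c i)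
    {x τ : ℤ →₀ ℕ}
    (h : Relation.ReflTransGen (fun x y => ∃ i, rfireAt a b i x y) x τ)
    (hst : ∀ m : ℤ, τ m < a + b) :
    ∀ i : ℤ, 0 ≤ i → i ≤ j - 1 → x = stc a b c i → τ = stc a b c (j - 1) := by
  induction h using Relation.ReflTransGen.head_induction_on with
  | refl =>
    intro i hi0 hij hx
    have hieq : i = j - 1 := by
      by_contra hne
      have h1 := hst (i + 1)
      rw [hx, stc_eval, if_neg (by omega), if_pos rfl] at h1
      have := hjmin (i + 1) (by omega) (by omega)
      omega
    rw [hx, hieq]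
  | @head x' y hstep htail ih =>
    intro i hi0 hij hx
    obtain ⟨v, hv1, hvge, hzero, hself, hright, hleft, hother⟩ := hstep
    rw [hx, stc_eval] at hvge
    split_ifs at hvge with h1 h2
    · exfalso; have := hcs v; omega
    · -- v = i + 1
      subst h2
      have hvj : i + 1 ≠ j := by intro heq; rw [heq] at hvge; omega
      have hy : y = stc a b c (i + 1) := by
        apply Finsupp.ext
        intro m
        rcases le_or_gt m 0 with hm | hm
        · rw [hzero m hm, stc_eval, if_neg (by omega), if_neg (by omega), hc0 m hm]
        · rcases eq_or_ne m (i + 1) with rfl | hm1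
          · rw [hself, hx, stc_eval, if_neg (by omega), if_pos rfl,
              stc_eval, if_pos rfl]
            omega
          · rcases eq_or_ne m (i + 1 + 1) with rfl | hm2
            · rw [hright, hx, stc_eval, if_neg (by omega), if_neg (by omega),
                stc_eval, if_neg (by omega), if_pos rfl]
            · rcases eq_or_ne m i with hm3 | hm3
              · subst m
                have hl := hleft (by omega)
                have hii : i + 1 - 1 = i := by omega
                rw [hii] at hl
                rw [hl, hx, stc_eval, if_pos rfl, stc_eval, if_neg (by omega),
                  if_neg (by omega)]
                have := hjmin i (by omega) (by omega)
                omega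
              · rw [hother m (by omega) (by omega) (by omega) (by omega),
                  hx, stc_eval, if_neg hm3, if_neg hm1,
                  stc_eval, if_neg (by omega), if_neg (by omega)]
      exact ih (i + 1) (by omega) (by omega) hy
    · exfalso; have := hcs v; omega

/-- Transition rule from settlement `ξ_k` to `ξ_{k+1}`:
with `j` the smallest index with fewer than `a` chips, if `j = 1` then `b` chips
are added at vertex `1`; if `j > 1` then vertex `j-1` loses `a` chips and vertex
`j` gains `b` chips; all other vertices are unchanged. -/
theorem stmt10 (a b : ℕ) (ha : 0 < a) (hab : a < b) (hcop : Nat.Coprime a b)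
    (ξ : ℕ → ℤ →₀ ℕ) (hξ : SettlementSeq a b ξ) (k : ℕ) (j : ℤ)
    (hj1 : 1 ≤ j) (hjlt : ξ k j < a)
    (hjmin : ∀ i : ℤ, 1 ≤ i → i < j → a ≤ ξ k i) :
    ∀ m : ℤ,
      (j = 1 → ξ (k + 1) m = if m = 1 then ξ k m + b else ξ k m) ∧
      (1 < j → ξ (k + 1) m =
        if m = j then ξ k m + b
        else if m = j - 1 then ξ k m - a
        else ξ k m) := by
  obtain ⟨hreach, hstfin⟩ := hξ.2 k
  set c := ξ k with hc
  have hc0 : ∀ m : ℤ, m ≤ 0 → c m = 0 := fun m hm => xi_zero a b ξ hξ k m hm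
  have hcs : ∀ m : ℤ, c m < a + b := by
    cases k with
    | zero => intro m; rw [hc, hξ.1]; simp; omega
    | succ k' => exact (hξ.2 k').2
  have hx0 : c + Finsupp.single 1 b = stc a b c 0 := by
    apply Finsupp.ext
    intro m
    rw [Finsupp.add_apply, Finsupp.single_apply, stc_eval]
    rcases eq_or_ne m 0 with rfl | hm0
    · rw [if_pos rfl, if_neg (by omega), hc0 0 le_rfl]
      omega
    · rw [if_neg hm0]
      split_ifs <;> omega
  have hfinal : ξ (k + 1) = stc a b c (j - 1) :=
    chain a b c hc0 hcs j hj1 hjlt hjmin hreach hstfin 0 le_rfl (by omega) hx0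
  intro m
  constructor
  · intro hj
    subst hj
    rw [hfinal, stc_eval]
    split_ifs <;>
      first
        | omega
        | (have := hc0 m (by omega); omega)
  · intro hj
    rw [hfinal, stc_eval]
    split_ifs <;> omega
end

section
/- During the stabilization of the right part after a single firing of the origin, vertex 1 (the origout) fires exactly once if the settlement before the origin fired had at least a chips at vertex 1, and fires zero times if it had fewer than a chips at vertex 1. -/
/-- Invariant maintained along a right-stabilization sequence started from
`σ + single 1 b`, where `c` records firing counts so far and `x` is the state. -/
def ChipInv (a b : ℕ) (σ : ℤ →₀ ℕ) (c : ℤ → ℕ) (x : ℤ →₀ ℕ) : Prop :=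
  (∀ j : ℤ, j ≤ 0 → c j = 0) ∧
  (c 1 ≤ if σ 1 < a then 0 else 1) ∧
  (∀ j : ℤ, 2 ≤ j → c j ≤ c (j - 1)) ∧
  (∀ j : ℤ, 1 ≤ j → (x j : ℤ) = (σ j : ℤ) + (if j = 1 then (b : ℤ) else 0)
      + a * c (j + 1) + b * c (j - 1) - (a + b) * c j)

lemma inv_step (a b : ℕ) (ha : 0 < a) (hab : a < b)
    (σ : ℤ →₀ ℕ) (hstable : ∀ m : ℤ, σ m < a + b)
    (c : ℤ → ℕ) (x y : ℤ →₀ ℕ) (i : ℤ)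
    (hInv : ChipInv a b σ c x) (hf : rfireAt a b i x y) :
    ChipInv a b σ (fun j => c j + if j = i then 1 else 0) y := by
  obtain ⟨hD, hB, hC, hA⟩ := hInv
  obtain ⟨hi1, hge, hzero, hyi, hyi1, hyim1, hother⟩ := hf
  have hge' : ((a : ℤ) + b) ≤ (x i : ℤ) := by exact_mod_cast hge
  have hxi := hA i (by omega)
  have hσi : ((σ i : ℕ) : ℤ) < (a : ℤ) + b := by exact_mod_cast hstable i
  refine ⟨?_, ?_, ?_, ?_⟩
  · intro j hj
    have hne : j ≠ i := by omega
    simp [hne, hD j hj]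
  · -- count at 1
    by_cases h1i : (1 : ℤ) = i
    · -- firing at vertex 1
      have hi : i = 1 := h1i.symm
      subst hi
      simp only [if_pos rfl]
      have hc0 : c 0 = 0 := hD 0 le_rfl
      have hc2 : c 2 ≤ c 1 := by
        have := hC 2 le_rfl
        norm_num at this
        exact this
      rw [if_pos rfl] at hxi
      norm_num at hxi
      by_cases hσ1 : σ 1 < a
      · exfalso
        rw [if_pos hσ1] at hB
        have hc1 : c 1 = 0 := Nat.le_zero.mp hB
        have hc2' : c 2 = 0 := by omega
        rw [hc0, hc1, hc2'] at hxi
        have : ((σ 1 : ℕ) : ℤ) < (a : ℤ) + b := by exact_mod_cast hstable 1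
        push_cast at hxi
        linarith
      · rw [if_neg hσ1] at hB ⊢
        rcases Nat.lt_or_ge (c 1) 1 with h | h
        · simp only [if_pos rfl, ite_true, if_true]
          omega
        · exfalso
          have hc1 : c 1 = 1 := by omega
          have hc2' : c 2 ≤ 1 := by omega
          have hm : ((c 2 : ℕ) : ℤ) ≤ 1 := by exact_mod_cast hc2'
          have hm' : (a : ℤ) * c 2 ≤ (a : ℤ) * 1 :=
            mul_le_mul_of_nonneg_left hm (by positivity)
          rw [hc0, hc1] at hxi
          have : ((σ 1 : ℕ) : ℤ) < (a : ℤ) + b := by exact_mod_cast hstable 1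
          push_cast at hxi
          linarith
    · have hne : (1 : ℤ) ≠ i := h1i
      simpa [hne] using hB
  · -- monotone counts
    intro j hj
    by_cases hji : j = i
    · subst hji
      have h2 : j - 1 ≠ j := by omega
      simp only [if_pos rfl, if_neg h2]
      have hle := hC j hj
      rcases lt_or_eq_of_le hle with hlt | heq
      · simp only [ite_true, if_true]
        omega
      · exfalso
        have hj1 : j ≠ 1 := by omega
        have hc2 : c (j + 1) ≤ c j := by
          have := hC (j + 1) (by omega)
          simpa using this
        have hm : ((c (j + 1) : ℕ) : ℤ) ≤ (c j : ℤ) := by exact_mod_cast hc2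
        have hm' : (a : ℤ) * c (j + 1) ≤ (a : ℤ) * c j :=
          mul_le_mul_of_nonneg_left hm (by positivity)
        have hbe : ((c (j - 1) : ℕ) : ℤ) = (c j : ℤ) := by exact_mod_cast heq.symm
        rw [if_neg hj1] at hxi
        have hbb : (b : ℤ) * c (j - 1) = (b : ℤ) * c j := by rw [hbe]
        linarith [hxi, hσi, hge', hm', hbb]
    · by_cases hji1 : j - 1 = i
      · simp only [if_neg hji, if_pos hji1]
        have := hC j hj
        omega
      · simp only [if_neg hji, if_neg hji1]
        simpa using hC j hj
  · -- state identity
    intro j hj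
    by_cases hji : j = i
    · subst hji
      have hy' : (y j : ℤ) = (x j : ℤ) - ((a : ℤ) + b) := by
        rw [hyi]
        have := hge
        push_cast [Nat.cast_sub this]
        ring
      have e1 : j + 1 ≠ j := by omega
      have e2 : j - 1 ≠ j := by omega
      simp only [if_neg e1, if_neg e2, if_pos rfl]
      push_cast
      rw [hy', hxi]
      ring
    · by_cases hj1 : j = i + 1
      · subst hj1
        have e1 : i + 1 + 1 ≠ i := by omega
        have e2 : i + 1 - 1 = i := by ring
        have e3 : i + 1 ≠ i := by omega
        have hA' := hA (i + 1) (by omega)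
        have hy' : (y (i + 1) : ℤ) = (x (i + 1) : ℤ) + b := by
          rw [hyi1]; push_cast; ring
        simp only [if_neg e1, e2, if_pos rfl, if_neg e3]
        push_cast
        rw [hy', hA']
        rw [e2]
        ring
      · by_cases hj2 : j = i - 1
        · subst hj2
          have e1 : i - 1 + 1 = i := by ring
          have e2 : i - 1 - 1 ≠ i := by omega
          have e3 : i - 1 ≠ i := by omega
          have hA' := hA (i - 1) (by omega)
          have hy' : (y (i - 1) : ℤ) = (x (i - 1) : ℤ) + a := by
            rw [hyim1 (by omega)]; push_cast; ring
          simp only [e1, if_pos rfl, if_neg e2, if_neg e3]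
          push_cast
          rw [hy', hA']
          rw [e1]
          ring
        · have e1 : j + 1 ≠ i := by omega
          have e2 : j - 1 ≠ i := by omega
          have hy' : y j = x j := hother j hj hj2 hji hj1
          simp only [if_neg e1, if_neg e2, if_neg hji]
          rw [hy']
          simpa using hA j hj

lemma inv_leads (a b : ℕ) (ha : 0 < a) (hab : a < b)
    (σ : ℤ →₀ ℕ) (hstable : ∀ m : ℤ, σ m < a + b)
    (x : ℤ →₀ ℕ) (L : List ℤ) (τ : ℤ →₀ ℕ) (h : RLeads a b x L τ) :
    ∀ c : ℤ → ℕ, ChipInv a b σ c x → ChipInv a b σ (fun j => c j + L.count j) τ := by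
  induction h with
  | nil s => intro c hc; simpa using hc
  | @cons s t s' i L hf hrest ih =>
      intro c hc
      have h1 := inv_step a b ha hab σ hstable c _ _ _ hc hf
      have h2 := ih _ h1
      have hfun : (fun j => (c j + if j = i then 1 else 0) + L.count j)
          = (fun j => c j + (i :: L).count j) := by
        funext j
        simp only [List.count_cons, beq_iff_eq]
        by_cases hji : j = i <;> simp [hji] <;> omega
      rwa [hfun] at h2

/-- During stabilization after one origin firing (adding `b` chips
at vertex `1` to a settlement `σ`), vertex `1` fires exactly once if `σ 1 ≥ a`
and zero times if `σ 1 < a`. -/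
theorem stmt11 (a b : ℕ) (ha : 0 < a) (hab : a < b) (hcop : Nat.Coprime a b)
    (σ : ℤ →₀ ℕ) (hsupp : ∀ m : ℤ, m ≤ 0 → σ m = 0) (hstable : ∀ i : ℤ, σ i < a + b)
    (L : List ℤ) (τ : ℤ →₀ ℕ)
    (h : RLeads a b (σ + Finsupp.single 1 b) L τ) (hτ : ∀ i : ℤ, τ i < a + b) :
    L.count 1 = if σ 1 < a then 0 else 1 := by
  classical
  have h0 : ChipInv a b σ (fun _ => 0) (σ + Finsupp.single 1 b) := by
    refine ⟨fun j _ => rfl, by simp, fun j _ => le_refl _, ?_⟩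
    intro j hj
    simp only [Finsupp.add_apply, Finsupp.single_apply]
    by_cases hj1 : j = 1
    · simp [hj1]
    · have : (1 : ℤ) = j ↔ False := by constructor <;> intro hh <;> simp_all [eq_comm]
      simp [hj1, this]
  have hInv := inv_leads a b ha hab σ hstable _ L τ h _ h0
  obtain ⟨hD, hB, hC, hA⟩ := hInv
  simp only [Nat.zero_add] at hD hB hC hA
  by_cases h1 : σ 1 < a
  · simp only [if_pos h1] at hB ⊢
    omega
  · simp only [if_neg h1] at hB ⊢
    rcases Nat.lt_or_ge (L.count 1) 1 with hlt | hgel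
    · exfalso
      have hc1 : L.count 1 = 0 := by omega
      have hA1 := hA 1 le_rfl
      simp only [if_pos rfl] at hA1
      have hc0 : L.count (1 - 1 : ℤ) = 0 := hD 0 le_rfl
      have hτ1 : ((τ 1 : ℕ) : ℤ) < (a : ℤ) + b := by exact_mod_cast hτ 1
      have hσ1 : (a : ℤ) ≤ ((σ 1 : ℕ) : ℤ) := by
        push_neg at h1; exact_mod_cast h1
      rw [hc0, hc1] at hA1
      have hpos : (0 : ℤ) ≤ (a : ℤ) * L.count (2 : ℤ) := by positivity
      push_cast at hA1
      linarith
    · omega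
end

section
/- In the 1-b chip-firing game with b > 1, the k-th settlement of the right part (for k ≥ 1) is the configuration with b−1 chips at each of vertices 1, …, k−1 and b chips at vertex k. -/
set_option maxHeartbeats 4000000


noncomputable def rnext (a b : ℕ) (i : ℤ) (σ : ℤ →₀ ℕ) : ℤ →₀ ℕ :=
  ((((σ.filter (fun m => 1 ≤ m)).update i (σ i - (a+b))).update (i+1) (σ (i+1) + b)).update
    (i-1) (if 1 ≤ i - 1 then σ (i-1) + a else 0))

lemma rnext_apply (a b : ℕ) (i : ℤ) (σ : ℤ →₀ ℕ) (m : ℤ) :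
    rnext a b i σ m =
      if m = i - 1 then (if 1 ≤ i - 1 then σ (i-1) + a else 0)
      else if m = i + 1 then σ (i+1) + b
      else if m = i then σ i - (a+b)
      else if 1 ≤ m then σ m else 0 := by
  simp only [rnext, Finsupp.coe_update, Function.update_apply, Finsupp.filter_apply]

lemma fire_eq {a b : ℕ} {i : ℤ} {σ σ' : ℤ →₀ ℕ} (h : rfireAt a b i σ σ') :
    σ' = rnext a b i σ := by
  obtain ⟨hi1, hle, h0, hii, hip, him, hoth⟩ := h
  ext m
  rw [rnext_apply]
  split_ifs with h1 h2 h3 h4 h5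
  · subst h1; exact him h2
  · exact h0 m (by omega)
  · subst h3; exact hip
  · subst h4; exact hii
  · exact hoth m h5 h1 h4 h3
  · exact h0 m (by omega)

lemma fire_rnext {a b : ℕ} {i : ℤ} {σ : ℤ →₀ ℕ} (hi : 1 ≤ i) (hle : a + b ≤ σ i) :
    rfireAt a b i σ (rnext a b i σ) := by
  refine ⟨hi, hle, ?_, ?_, ?_, ?_, ?_⟩ <;>
    (intros; rw [rnext_apply]; split_ifs <;> omega)

lemma rnext_mono {a b : ℕ} {i j : ℤ} (σ : ℤ →₀ ℕ) (hi : 1 ≤ i) (hj : 1 ≤ j)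
    (hij : i ≠ j) : σ i ≤ rnext a b j σ i := by
  rw [rnext_apply]
  split_ifs with h1 h2 h3 h4 <;> simp_all <;> omega

lemma rnext_comm {a b : ℕ} {i j : ℤ} (σ : ℤ →₀ ℕ) (hi : 1 ≤ i) (hj : 1 ≤ j)
    (hij : i ≠ j) (hsi : a + b ≤ σ i) (hsj : a + b ≤ σ j) :
    rnext a b i (rnext a b j σ) = rnext a b j (rnext a b i σ) := by
  ext m
  simp only [rnext_apply]
  split_ifs <;> first
    | omega
    | (rename_i h; rw [h]; omega)
    | (rename_i h; rw [← h]; omega)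
    | (rename_i h _; rw [h]; omega)
    | (rename_i h _; rw [← h]; omega)
    | (rename_i h _ _; rw [h]; omega)
    | (rename_i h _ _; rw [← h]; omega)

lemma rperm (a b : ℕ) : ∀ (L : List ℤ) (σ σ1 τ : ℤ →₀ ℕ) (i : ℤ),
    rfireAt a b i σ σ1 → RLeads a b σ L τ → (∀ n : ℤ, τ n < a + b) →
    ∃ L', RLeads a b σ1 L' τ := by
  intro L
  induction L with
  | nil =>
    intro σ σ1 τ i hf hL hstab
    cases hL
    exact absurd hf.2.1 (by have := hstab i; omega)
  | cons j L1 ih =>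
    intro σ σ1 τ i hf hL hstab
    cases hL with
    | cons hj hrest =>
      rename_i σ2
      by_cases hij : i = j
      · subst hij
        rw [fire_eq hj, ← fire_eq hf] at hrest
        exact ⟨L1, hrest⟩
      · have hσ2 : σ2 = rnext a b j σ := fire_eq hj
        have hσ1 : σ1 = rnext a b i σ := fire_eq hf
        have hfi2 : a + b ≤ σ2 i := by
          rw [hσ2]
          exact le_trans hf.2.1 (rnext_mono σ hf.1 hj.1 hij)
        have hfire2 : rfireAt a b i σ2 (rnext a b i σ2) := fire_rnext hf.1 hfi2
        obtain ⟨L'', hL''⟩ := ih σ2 (rnext a b i σ2) τ i hfire2 hrest hstab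
        have hcomm : rnext a b i σ2 = rnext a b j σ1 := by
          rw [hσ2, hσ1]
          exact rnext_comm σ hf.1 hj.1 hij hf.2.1 hj.2.1
        have hfj1 : a + b ≤ σ1 j := by
          rw [hσ1]
          exact le_trans hj.2.1 (rnext_mono σ hj.1 hf.1 (Ne.symm hij))
        have hfirej : rfireAt a b j σ1 (rnext a b i σ2) := by
          rw [hcomm]; exact fire_rnext hj.1 hfj1
        exact ⟨j :: L'', RLeads.cons hfirej hL''⟩

lemma runiq (a b : ℕ) : ∀ (L L' : List ℤ) (σ τ τ' : ℤ →₀ ℕ),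
    RLeads a b σ L τ → (∀ n : ℤ, τ n < a + b) →
    RLeads a b σ L' τ' → (∀ n : ℤ, τ' n < a + b) → τ = τ' := by
  intro L
  induction L with
  | nil =>
    intro L' σ τ τ' h1 hs1 h2 hs2
    cases h1
    cases h2 with
    | nil => rfl
    | cons hf _ => exact absurd hf.2.1 (by rename_i i0 L0 τ2; have := hs1 i0; omega)
  | cons i L1 ih =>
    intro L' σ τ τ' h1 hs1 h2 hs2
    cases h1 with
    | cons hf hrest =>
      obtain ⟨L'', hL''⟩ := rperm a b L' σ _ τ' i hf h2 hs2
      exact ih L'' _ _ _ hrest hs1 hL'' hs2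

lemma settles_list {a b : ℕ} {σ τ : ℤ →₀ ℕ}
    (h : Relation.ReflTransGen (fun x y => ∃ i, rfireAt a b i x y) σ τ) :
    ∃ L, RLeads a b σ L τ := by
  induction h using Relation.ReflTransGen.head_induction_on with
  | refl => exact ⟨[], RLeads.nil _⟩
  | head hstep _ ih =>
    obtain ⟨i, hi⟩ := hstep
    obtain ⟨L, hL⟩ := ih
    exact ⟨i :: L, RLeads.cons hi hL⟩

lemma rleads_append {a b : ℕ} {σ τ τ' : ℤ →₀ ℕ} {L L' : List ℤ}
    (h1 : RLeads a b σ L τ) (h2 : RLeads a b τ L' τ') : RLeads a b σ (L ++ L') τ' := by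
  induction h1 with
  | nil => exact h2
  | cons hf _ ih => exact RLeads.cons hf (ih h2)

noncomputable def chain_s18 (b : ℕ) (σ : ℤ →₀ ℕ) : ℕ → ℤ →₀ ℕ
  | 0 => σ
  | j+1 => rnext 1 b ((j : ℤ) + 1) (chain_s18 b σ j)

def G (b k j : ℕ) (m : ℤ) : ℕ :=
  if 1 ≤ m ∧ m < (j : ℤ) then b - 1
  else if 1 ≤ j ∧ m = (j : ℤ) then (if j < k then b - 2 else b - 1)
  else if m = (j : ℤ) + 1 then
    (if (j : ℤ) + 1 < (k : ℤ) then 2*b - 1 else if (j : ℤ) + 1 = (k : ℤ) then 2*b else b)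
  else if (j : ℤ) + 1 < m ∧ m < (k : ℤ) then b - 1
  else if m = (k : ℤ) ∧ (j : ℤ) + 1 < (k : ℤ) then b
  else 0

lemma chainG (b k : ℕ) (hb : 1 < b) (hk : 1 ≤ k) (σ : ℤ →₀ ℕ)
    (hσ : ∀ m, σ m = G b k 0 m) :
    ∀ j, j ≤ k → (∀ m, chain_s18 b σ j m = G b k j m) ∧ ∃ L, RLeads 1 b σ L (chain_s18 b σ j) := by
  intro j
  induction j with
  | zero => exact fun _ => ⟨hσ, ⟨[], RLeads.nil _⟩⟩
  | succ j ih =>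
    intro hjk
    obtain ⟨hv, L, hL⟩ := ih (by omega)
    have hfire : 1 + b ≤ (chain_s18 b σ j) ((j : ℤ) + 1) := by
      rw [hv]
      simp only [G]
      split_ifs <;> omega
    have hnext : ∀ m, chain_s18 b σ (j+1) m = G b k (j+1) m := by
      intro m
      show rnext 1 b ((j : ℤ) + 1) (chain_s18 b σ j) m = _
      rw [rnext_apply]
      simp only [hv]
      simp only [G]
      push_cast
      simp only [true_and, and_true]
      split_ifs <;> omega
    refine ⟨hnext, ⟨L ++ [(j : ℤ) + 1], ?_⟩⟩
    have hstep : RLeads 1 b (chain_s18 b σ j) [(j : ℤ) + 1] (chain_s18 b σ (j+1)) :=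
      RLeads.cons (fire_rnext (by omega) hfire) (RLeads.nil _)
    exact rleads_append hL hstep

/-- In the 1-b game (`b > 1`), the `k`-th settlement (`k ≥ 1`) has
`b-1` chips at each of the vertices `1,…,k-1`, `b` chips at vertex `k`, and
no chips elsewhere. -/
theorem stmt18 (b : ℕ) (hb : 1 < b) (ξ : ℕ → ℤ →₀ ℕ)
    (hξ : SettlementSeq 1 b ξ) (k : ℕ) (hk : 1 ≤ k) :
    ∀ m : ℤ, ξ k m =
      if 1 ≤ m ∧ m < (k : ℤ) then b - 1
      else if m = (k : ℤ) then b
      else 0 := by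
  obtain ⟨h0, hstep⟩ := hξ
  induction k, hk using Nat.le_induction with
  | base =>
    obtain ⟨hreach, hstab⟩ := hstep 0
    rw [h0, zero_add] at hreach
    obtain ⟨L, hL⟩ := settles_list hreach
    have hstab' : ∀ n : ℤ, (Finsupp.single 1 b : ℤ →₀ ℕ) n < 1 + b := by
      intro n; rw [Finsupp.single_apply]; split_ifs <;> omega
    have heq := runiq 1 b L [] _ _ _ hL hstab (RLeads.nil _) hstab'
    intro m
    rw [heq, Finsupp.single_apply]
    push_cast
    split_ifs <;> omega
  | succ k hk1 ih =>
    have hσ : ∀ m, (ξ k + Finsupp.single 1 b : ℤ →₀ ℕ) m = G b k 0 m := by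
      intro m
      rw [Finsupp.add_apply, Finsupp.single_apply, ih m]
      simp only [G]
      push_cast
      simp only [false_and, true_and, and_true, and_false, if_false, if_true]
      split_ifs <;> omega
    obtain ⟨hv, L, hL⟩ := chainG b k hb hk1 _ hσ k le_rfl
    have hstabc : ∀ n : ℤ, (chain_s18 b (ξ k + Finsupp.single 1 b) k) n < 1 + b := by
      intro n; rw [hv]; simp only [G]; split_ifs <;> omega
    obtain ⟨hreach, hstab⟩ := hstep k
    obtain ⟨L', hL'⟩ := settles_list hreach
    have heq := runiq 1 b L' L _ _ _ hL' hstab hL hstabc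
    intro m
    rw [heq, hv]
    simp only [G]
    push_cast
    split_ifs <;> omega
end

section
/- In the 1-2 chip-firing game starting with n > 3 chips, the left part of the final state is obtained by writing n in binary, removing the leading digit, and increasing every remaining digit by 1 (so digits 0,1 become 1,2); i.e., if n = 2^k + Σ_{i=0}^{k−1} b_i 2^i with b_i ∈ {0,1}, then the final state has b_i + 1 chips at vertex −i for 0 ≤ i ≤ k−1. -/
/-!
Record a legal firing sequence by its odometer `w` (the number of firings at each vertex). Firing
preserves `Σ σ_m t^(-m)` for `t = 1, 2` (the roots of `t + 2/t = 3`), and the weight `1 - 2^(-m)` on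
the vertices `m ≥ 1` adds up to `w 0`. In a stable final state the right part contributes a number
in `(0, 2)` at `t = 2` which is also an integer, hence `1`: the left part is a binary representation
of `n - 1` with digits in `{0, 1, 2}`, and the right part holds `w 0 + 1` chips.

By the least action principle `w` is dominated by any vector whose firing would leave a stable
configuration. An explicit such vector gives `w 0 ≤ n - 1 - s`, where `s` is the digit sum of the
representation of `n - 1` with digits in `{1, 2}`, so the left part has digit sum at least `s`.
Comparing partial sums shows that this representation is the unique one of maximal digit sum.
-/

open Finset

theorem fireAt.add_single {a b : ℕ} {i : ℤ} {σ σ' : ℤ →₀ ℕ} (h : fireAt a b i σ σ') :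
    σ' + Finsupp.single i (a + b) = σ + Finsupp.single (i - 1) a + Finsupp.single (i + 1) b := by
  obtain ⟨hi, hl, hc, hr, hrest⟩ := h
  ext m
  simp only [Finsupp.coe_add, Pi.add_apply, Finsupp.single_apply]
  by_cases h₁ : m = i - 1
  · subst h₁; rw [hl]; split_ifs <;> omega
  by_cases h₂ : m = i
  · subst h₂; rw [hc]; split_ifs <;> omega
  by_cases h₃ : m = i + 1
  · subst h₃; rw [hr]; split_ifs <;> omega
  rw [hrest m h₁ h₂ h₃]; split_ifs <;> omega

-- Firing `w m` times at every vertex `m`, legally or not, turns `σ` into `τ`.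
def IsOdometer (a b : ℕ) (σ τ w : ℤ →₀ ℕ) : Prop :=
  τ + (a + b) • w = σ + a • w.mapDomain (· - 1) + b • w.mapDomain (· + 1)

namespace IsOdometer

variable {a b : ℕ} {σ τ w : ℤ →₀ ℕ}

theorem zero : IsOdometer a b σ σ 0 := by simp [IsOdometer]

theorem apply_eq (h : IsOdometer a b σ τ w) (m : ℤ) :
    τ m + (a + b) * w m = σ m + a * w (m + 1) + b * w (m - 1) := by
  have hl : w.mapDomain (· - 1) m = w (m + 1) := by
    simpa using Finsupp.mapDomain_apply (sub_left_injective (b := (1 : ℤ))) w (m + 1)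
  have hr : w.mapDomain (· + 1) m = w (m - 1) := by
    simpa using Finsupp.mapDomain_apply (add_left_injective (1 : ℤ)) w (m - 1)
  simpa [hl, hr] using DFunLike.congr_fun h m

theorem fire {i : ℤ} {τ' : ℤ →₀ ℕ} (h : IsOdometer a b σ τ w) (hf : fireAt a b i τ τ') :
    IsOdometer a b σ τ' (w + Finsupp.single i 1) := by
  unfold IsOdometer at *
  simp only [Finsupp.mapDomain_add, Finsupp.mapDomain_single, smul_add, Finsupp.smul_single,
    smul_eq_mul, mul_one]
  calc τ' + ((a + b) • w + Finsupp.single i (a + b))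
      = (τ' + Finsupp.single i (a + b)) + (a + b) • w := by abel
    _ = (τ + (a + b) • w) + Finsupp.single (i - 1) a + Finsupp.single (i + 1) b := by
      rw [hf.add_single]; abel
    _ = _ := by rw [h]; abel

end IsOdometer

theorem Reaches.exists_odometer_le {a b : ℕ} {σ τ : ℤ →₀ ℕ} (h : Reaches a b σ τ) (v : ℤ → ℕ)
    (hv : ∀ m, σ m + a * v (m + 1) + b * v (m - 1) < (a + b) * (v m + 1)) :
    ∃ w : ℤ →₀ ℕ, (∀ m, w m ≤ v m) ∧ IsOdometer a b σ τ w := by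
  induction h with
  | refl => exact ⟨0, fun _ => Nat.zero_le _, IsOdometer.zero⟩
  | tail _ hstep ih =>
    obtain ⟨w, hwv, hw⟩ := ih
    obtain ⟨i, hf⟩ := hstep
    -- If `w i = v i`, the neighbours of `i` have fired at most as in `v`, so fewer than `a + b`
    -- chips could be at `i`.
    have hlt : w i < v i := by
      by_contra! hvw
      have hτ := hw.apply_eq i
      rw [le_antisymm (hwv i) hvw] at hτ
      have hvi := hv i
      rw [mul_add_one] at hvi
      have := Nat.mul_le_mul_left a (hwv (i + 1))
      have := Nat.mul_le_mul_left b (hwv (i - 1))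
      have := hf.1
      omega
    refine ⟨w + Finsupp.single i 1, fun m => ?_, hw.fire hf⟩
    rcases eq_or_ne i m with rfl | hne
    · simpa using hlt
    · simpa [Finsupp.single_apply, hne] using hwv m

noncomputable def weightedSum (g : ℤ → ℚ) (σ : ℤ →₀ ℕ) : ℚ := σ.sum fun m c => c * g m

section WeightedSum

variable (g : ℤ → ℚ)

theorem weightedSum_add (σ τ : ℤ →₀ ℕ) :
    weightedSum g (σ + τ) = weightedSum g σ + weightedSum g τ :=
  Finsupp.sum_add_index' (by simp) fun _ _ _ => by push_cast; ring

theorem weightedSum_nsmul (c : ℕ) (σ : ℤ →₀ ℕ) :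
    weightedSum g (c • σ) = c * weightedSum g σ := by
  rw [weightedSum, Finsupp.sum_smul_index (by simp), weightedSum, Finsupp.mul_sum]
  push_cast
  simp only [mul_assoc]

theorem weightedSum_single (i : ℤ) (c : ℕ) : weightedSum g (Finsupp.single i c) = c * g i :=
  Finsupp.sum_single_index (by simp)

theorem weightedSum_mapDomain (f : ℤ → ℤ) (w : ℤ →₀ ℕ) :
    weightedSum g (w.mapDomain f) = weightedSum (g ∘ f) w :=
  Finsupp.sum_mapDomain_index (by simp) fun _ _ _ => by push_cast; ring

theorem weightedSum_eq_sum_range {σ : ℤ →₀ ℕ} {J : ℕ} (hJ : σ.support ⊆ Ioc (-(J : ℤ)) J) :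
    weightedSum g σ = ∑ i ∈ range J, σ (-i) * g (-i) + ∑ i ∈ range J, σ (i + 1) * g (i + 1) := by
  rw [weightedSum, Finsupp.sum_of_support_subset σ hJ _ (by simp),
    ← Ioc_union_Ioc_eq_Ioc (by omega : -(J : ℤ) ≤ 0) (by omega : (0 : ℤ) ≤ J),
    sum_union (Ioc_disjoint_Ioc_of_le le_rfl)]
  congr 1
  · refine (sum_nbij' (fun i : ℕ => -(i : ℤ)) (fun m => (-m).toNat) ?_ ?_ ?_ ?_ ?_).symm <;>
      intro x hx <;> simp only [mem_range, mem_Ioc] at hx ⊢ <;> omega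
  · refine (sum_nbij' (fun i : ℕ => (i : ℤ) + 1) (fun m => (m - 1).toNat) ?_ ?_ ?_ ?_ ?_).symm <;>
      intro x hx <;> simp only [mem_range, mem_Ioc] at hx ⊢ <;> omega

theorem weightedSum_ite_eq (w : ℤ →₀ ℕ) (i : ℤ) :
    weightedSum (fun m => if m = i then 1 else 0) w = w i := by
  simp only [weightedSum, Finsupp.sum, mul_ite, mul_one, mul_zero, sum_ite_eq',
    Finsupp.mem_support_iff, ite_not]
  split_ifs with h <;> simp [h]

end WeightedSum

theorem IsOdometer.weightedSum_eq {a b : ℕ} {σ τ w : ℤ →₀ ℕ} (h : IsOdometer a b σ τ w)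
    (g : ℤ → ℚ) : weightedSum g τ = weightedSum g σ
      + weightedSum (fun i => a * g (i - 1) + b * g (i + 1) - (a + b) * g i) w := by
  have hg := congrArg (weightedSum g) h
  simp only [weightedSum_add, weightedSum_nsmul, weightedSum_mapDomain] at hg
  have hlin : weightedSum (fun i => a * g (i - 1) + b * g (i + 1) - (a + b) * g i) w
      = a * weightedSum (g ∘ (· - 1)) w + b * weightedSum (g ∘ (· + 1)) w
        - (a + b) * weightedSum g w := by
    simp only [weightedSum, Finsupp.sum, mul_sum, ← sum_add_distrib, ← sum_sub_distrib,
      Function.comp]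
    exact sum_congr rfl fun _ _ => by ring
  push_cast at hg
  linarith

theorem statePoly_eq_weightedSum (σ : ℤ →₀ ℕ) (t : ℚ) :
    statePoly σ t = weightedSum (fun m => t ^ (-m)) σ := rfl

theorem statePoly_initState (n : ℕ) (t : ℚ) : statePoly (initState n) t = n := by
  rw [statePoly_eq_weightedSum, initState, weightedSum_single]
  simp

theorem IsOdometer.statePoly_eq {a b : ℕ} {σ τ w : ℤ →₀ ℕ} (h : IsOdometer a b σ τ w) {t : ℚ}
    (ht₀ : t ≠ 0) (ht : a * t + b * t⁻¹ = a + b) : statePoly τ t = statePoly σ t := by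
  have hzero : (fun i : ℤ => (a : ℚ) * t ^ (-(i - 1)) + b * t ^ (-(i + 1)) - (a + b) * t ^ (-i))
      = fun _ => 0 := by
    funext i
    rw [show -(i - 1) = -i + 1 by ring, show -(i + 1) = -i - 1 by ring, zpow_add₀ ht₀,
      zpow_sub₀ ht₀, zpow_one]
    linear_combination t ^ (-i) * ht
  rw [statePoly_eq_weightedSum, statePoly_eq_weightedSum, h.weightedSum_eq, hzero]
  simp [weightedSum]

theorem IsOdometer.weightedSum_right_eq {n : ℕ} {σ w : ℤ →₀ ℕ}
    (h : IsOdometer 1 2 (initState n) σ w) :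
    weightedSum (fun m => if 1 ≤ m then 1 - 2 ^ (-m) else 0) σ = w 0 := by
  have hδ : ∀ i : ℤ, 1 * (if 1 ≤ i - 1 then 1 - (2 : ℚ) ^ (-(i - 1)) else 0)
      + 2 * (if 1 ≤ i + 1 then 1 - (2 : ℚ) ^ (-(i + 1)) else 0)
      - (1 + 2) * (if 1 ≤ i then 1 - (2 : ℚ) ^ (-i) else 0) = if i = 0 then 1 else 0 := by
    intro i
    rcases lt_trichotomy i 0 with hi | rfl | hi
    · simp [show ¬ 1 ≤ i - 1 by omega, show ¬ 1 ≤ i + 1 by omega, show ¬ 1 ≤ i by omega, hi.ne]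
    · norm_num
    rw [show -(i - 1) = -i + 1 by ring, show -(i + 1) = -i - 1 by ring, zpow_add₀ two_ne_zero,
      zpow_sub₀ two_ne_zero, zpow_one, if_pos (by omega : 1 ≤ i + 1), if_pos (by omega : 1 ≤ i),
      if_neg hi.ne']
    rcases eq_or_lt_of_le (show 1 ≤ i by omega) with rfl | hi₁
    · norm_num
    · rw [if_pos (by omega)]; ring
  rw [h.weightedSum_eq]
  simp only [Nat.cast_one, Nat.cast_ofNat, hδ, weightedSum_ite_eq, initState, weightedSum_single]
  simp

theorem zpow_neg_natCast_add_one {α : Type*} [DivisionRing α] (x : α) (i : ℕ) :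
    x ^ (-((i : ℤ) + 1)) = (x ^ (i + 1))⁻¹ := by
  rw [zpow_neg]; norm_cast

theorem sum_range_inv_two_pow_succ_lt (J : ℕ) : ∑ i ∈ range J, ((2 : ℚ) ^ (i + 1))⁻¹ < 1 := by
  have : ∑ i ∈ range J, ((2 : ℚ) ^ (i + 1))⁻¹ = 1 - ((2 : ℚ) ^ J)⁻¹ := by
    induction J with
    | zero => simp
    | succ J ih => rw [sum_range_succ, ih, pow_succ]; field_simp; ring
  rw [this]
  simp

section Window

variable {n J : ℕ} {σ w : ℤ →₀ ℕ} (hJ : σ.support ⊆ Ioc (-(J : ℤ)) J)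
include hJ

theorem IsOdometer.sum_left_add_sum_right (h : IsOdometer 1 2 (initState n) σ w) :
    ∑ i ∈ range J, σ (-i) + ∑ i ∈ range J, σ (i + 1) = n := by
  have := h.statePoly_eq (t := 1) one_ne_zero (by norm_num)
  rw [statePoly_initState, statePoly_eq_weightedSum, weightedSum_eq_sum_range _ hJ] at this
  have hℚ : ∑ i ∈ range J, (σ (-i) : ℚ) + ∑ i ∈ range J, (σ (i + 1) : ℚ) = n := by
    simpa using this
  exact_mod_cast hℚ

theorem IsOdometer.sum_left_two_pow_add_sum_right (h : IsOdometer 1 2 (initState n) σ w) :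
    ((∑ i ∈ range J, σ (-i) * 2 ^ i : ℕ) : ℚ) + ∑ i ∈ range J, σ (i + 1) * ((2 : ℚ) ^ (i + 1))⁻¹
      = n := by
  have := h.statePoly_eq (t := 2) two_ne_zero (by norm_num)
  rw [statePoly_initState, statePoly_eq_weightedSum, weightedSum_eq_sum_range _ hJ] at this
  simp only [zpow_neg_natCast_add_one, neg_neg, zpow_natCast] at this
  exact_mod_cast this

theorem IsOdometer.sum_right_sub_eq (h : IsOdometer 1 2 (initState n) σ w) :
    ∑ i ∈ range J, (σ (i + 1) : ℚ) - ∑ i ∈ range J, σ (i + 1) * ((2 : ℚ) ^ (i + 1))⁻¹ = w 0 := by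
  rw [← h.weightedSum_right_eq, weightedSum_eq_sum_range _ hJ, ← sum_sub_distrib]
  simp only [zpow_neg_natCast_add_one]
  simp [mul_sub, show ∀ x : ℕ, ¬ (1 : ℤ) ≤ -x from fun x => by omega]

theorem IsOdometer.sum_left_of_stable (h : IsOdometer 1 2 (initState n) σ w) (hn : 3 ≤ n)
    (hst : ∀ m, σ m < 3) :
    ∑ i ∈ range J, σ (-i) * 2 ^ i = n - 1 ∧ ∑ i ∈ range J, σ (-i) + w 0 + 1 = n := by
  have hLR := h.sum_left_two_pow_add_sum_right hJ
  have hw₀ := h.sum_right_sub_eq hJ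
  have hchips := h.sum_left_add_sum_right hJ
  set L := ∑ i ∈ range J, σ (-i) * 2 ^ i
  set R : ℚ := ∑ i ∈ range J, σ (i + 1) * ((2 : ℚ) ^ (i + 1))⁻¹
  have hw₀_pos : 1 ≤ w 0 := by
    have h₀ := h.apply_eq 0
    simp only [initState, Finsupp.single_eq_same] at h₀
    have := hst 0
    omega
  have hR_lt : R < 2 :=
    calc R = ∑ i ∈ range J, σ (i + 1) * ((2 : ℚ) ^ (i + 1))⁻¹ := rfl
      _ ≤ ∑ i ∈ range J, 2 * ((2 : ℚ) ^ (i + 1))⁻¹ := by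
          gcongr with i
          exact_mod_cast Nat.le_of_lt_succ (hst _)
      _ < 2 := by rw [← mul_sum]; linarith [sum_range_inv_two_pow_succ_lt J]
  have hR_pos : 0 < R := by
    have : (0 : ℚ) < ∑ i ∈ range J, (σ (i + 1) : ℚ) := by
      have : (1 : ℚ) ≤ w 0 := by exact_mod_cast hw₀_pos
      linarith [show 0 ≤ R by positivity]
    obtain ⟨i, hi, hσi⟩ := exists_ne_zero_of_sum_ne_zero this.ne'
    exact sum_pos' (fun i _ => by positivity) ⟨i, hi, by positivity⟩
  -- `R = n - L` is an integer in `(0, 2)`.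
  have hnL : n = L + 1 := by
    have h₁ : L < n := by exact_mod_cast (by linarith : (L : ℚ) < n)
    have h₂ : n < L + 2 := by exact_mod_cast (by linarith : (n : ℚ) < L + 2)
    omega
  have hR : R = 1 := by rw [hnL] at hLR; push_cast at hLR; linarith
  refine ⟨by omega, ?_⟩
  have : (∑ i ∈ range J, σ (i + 1) : ℕ) = w 0 + 1 := by
    exact_mod_cast (by push_cast; linarith : ((∑ i ∈ range J, σ (i + 1) : ℕ) : ℚ) = w 0 + 1)
  omega

end Window

theorem geom_sum_two_add_one (j : ℕ) : ∑ i ∈ range j, 2 ^ i + 1 = 2 ^ j := by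
  have := geom_sum_mul_add 1 j
  norm_num at this
  exact this

theorem sum_succ_mul_two_pow_add_one (b : ℕ → ℕ) (k : ℕ) :
    ∑ i ∈ range k, (b i + 1) * 2 ^ i + 1 = 2 ^ k + ∑ i ∈ range k, b i * 2 ^ i := by
  rw [← geom_sum_two_add_one k]
  simp only [add_mul, one_mul, sum_add_distrib]
  ring

theorem sum_range_ite_lt (f : ℕ → ℕ) {k J : ℕ} (hkJ : k ≤ J) :
    ∑ i ∈ range J, (if i < k then f i else 0) = ∑ i ∈ range k, f i := by
  rw [← sum_range_add_sum_Ico _ hkJ, sum_eq_zero (s := Ico k J)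
    fun i hi => if_neg (by simp at hi; omega), add_zero]
  exact sum_congr rfl fun i hi => if_pos (mem_range.mp hi)

section Digits

variable (d e : ℕ → ℕ)

theorem digitSum_eq_sum_partialSums (J : ℕ) :
    (∑ i ∈ range J, d i : ℚ)
      = ∑ j ∈ range J, ((∑ i ∈ range (j + 1), d i * 2 ^ i : ℕ) : ℚ) / 2 ^ (j + 1)
        + ((∑ i ∈ range J, d i * 2 ^ i : ℕ) : ℚ) / 2 ^ J := by
  induction J with
  | zero => simp
  | succ J ih =>
    rw [sum_range_succ, ih, sum_range_succ _ J, sum_range_succ (fun i => d i * 2 ^ i)]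
    push_cast
    field_simp
    ring

theorem eq_of_digitSum_le_of_partialSum_le {J : ℕ}
    (hle : ∀ j ≤ J, ∑ i ∈ range j, d i * 2 ^ i ≤ ∑ i ∈ range j, e i * 2 ^ i)
    (heq : ∑ i ∈ range J, d i * 2 ^ i = ∑ i ∈ range J, e i * 2 ^ i)
    (hsum : ∑ i ∈ range J, e i ≤ ∑ i ∈ range J, d i) : ∀ i < J, d i = e i := by
  -- The digit-sum difference is a positive combination of the gaps between partial sums.
  have hgap : ∑ j ∈ range J, (((∑ i ∈ range (j + 1), e i * 2 ^ i : ℕ) : ℚ)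
      - (∑ i ∈ range (j + 1), d i * 2 ^ i : ℕ)) / 2 ^ (j + 1) ≤ 0 := by
    have hd := digitSum_eq_sum_partialSums d J
    have he := digitSum_eq_sum_partialSums e J
    have hsum' : ∑ i ∈ range J, (e i : ℚ) ≤ ∑ i ∈ range J, (d i : ℚ) := by exact_mod_cast hsum
    simp only [sub_div, sum_sub_distrib]
    rw [heq] at hd
    linarith
  have hnonneg : ∀ j ∈ range J, 0 ≤ (((∑ i ∈ range (j + 1), e i * 2 ^ i : ℕ) : ℚ)
      - (∑ i ∈ range (j + 1), d i * 2 ^ i : ℕ)) / 2 ^ (j + 1) := fun j hj => by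
    have h : ((∑ i ∈ range (j + 1), d i * 2 ^ i : ℕ) : ℚ)
        ≤ (∑ i ∈ range (j + 1), e i * 2 ^ i : ℕ) := mod_cast hle (j + 1) (mem_range.mp hj)
    exact div_nonneg (by linarith) (by positivity)
  have hpartial : ∀ j ≤ J, ∑ i ∈ range j, d i * 2 ^ i = ∑ i ∈ range j, e i * 2 ^ i := by
    intro j hj
    rcases j with _ | j
    · simp
    have := (sum_eq_zero_iff_of_nonneg hnonneg).mp (le_antisymm hgap (sum_nonneg hnonneg)) j
      (mem_range.mpr hj)
    rw [div_eq_zero_iff, sub_eq_zero] at this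
    exact_mod_cast (this.resolve_right (by positivity)).symm
  intro i hi
  have h := hpartial (i + 1) hi
  rw [sum_range_succ, sum_range_succ, hpartial i hi.le] at h
  exact Nat.eq_of_mul_eq_mul_right (by positivity) (Nat.add_left_cancel h)

theorem partialSum_le_of_le_two_of_one_le {k J : ℕ} (hd : ∀ i, d i ≤ 2)
    (he : ∀ i < k, 1 ≤ e i) (he₀ : ∀ i, k ≤ i → e i = 0)
    (heq : ∑ i ∈ range J, d i * 2 ^ i = ∑ i ∈ range J, e i * 2 ^ i) :
    ∀ j ≤ J, ∑ i ∈ range j, d i * 2 ^ i ≤ ∑ i ∈ range j, e i * 2 ^ i := by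
  intro j hj
  rw [← sum_range_add_sum_Ico _ hj, ← sum_range_add_sum_Ico (fun i => e i * 2 ^ i) hj] at heq
  rcases le_or_gt j k with hjk | hkj
  -- The two partial sums agree modulo `2 ^ j`, and `e`'s is at least `2 ^ j - 1` while `d`'s is
  -- at most `2 ^ (j + 1) - 2`.
  · have hdvd : ∀ f : ℕ → ℕ, 2 ^ j ∣ ∑ i ∈ Ico j J, f i * 2 ^ i := fun f =>
      dvd_sum fun i hi => Dvd.dvd.mul_left (pow_dvd_pow 2 (mem_Ico.mp hi).1) _
    obtain ⟨A, hA⟩ := hdvd d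
    obtain ⟨B, hB⟩ := hdvd e
    have hgeom := geom_sum_two_add_one j
    have hD : ∑ i ∈ range j, d i * 2 ^ i ≤ 2 * ∑ i ∈ range j, 2 ^ i := by
      rw [mul_sum]; exact sum_le_sum fun i _ => Nat.mul_le_mul_right _ (hd i)
    have hE : ∑ i ∈ range j, 2 ^ i ≤ ∑ i ∈ range j, e i * 2 ^ i :=
      sum_le_sum fun i hi => Nat.le_mul_of_pos_left _ (he i (by simp at hi; omega))
    by_contra! hlt
    have hAB : A + 1 ≤ B := by
      by_contra! hBA
      have := Nat.mul_le_mul_left (2 ^ j) (Nat.le_of_lt_succ hBA)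
      omega
    have := Nat.mul_le_mul_left (2 ^ j) hAB
    rw [mul_add_one] at this
    omega
  · have hE : ∑ i ∈ Ico j J, e i * 2 ^ i = 0 :=
      sum_eq_zero fun i hi => by rw [he₀ i (by simp at hi; omega), zero_mul]
    omega

theorem eq_of_digitSum_le {k J : ℕ} (hd : ∀ i, d i ≤ 2) (he : ∀ i < k, 1 ≤ e i)
    (he₀ : ∀ i, k ≤ i → e i = 0)
    (heq : ∑ i ∈ range J, d i * 2 ^ i = ∑ i ∈ range J, e i * 2 ^ i)
    (hsum : ∑ i ∈ range J, e i ≤ ∑ i ∈ range J, d i) : ∀ i < J, d i = e i :=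
  eq_of_digitSum_le_of_partialSum_le d e (partialSum_le_of_le_two_of_one_le d e hd he he₀ heq)
    heq hsum

end Digits

section Odometer

variable (e : ℕ → ℕ) (J : ℕ)

def tailValue (j : ℕ) : ℕ := ∑ t ∈ Ico j J, e t * 2 ^ (t - j)

def tailSum (j : ℕ) : ℕ := ∑ t ∈ Ico j J, e t

variable {e J}

theorem tailValue_eq_add {j : ℕ} (hj : j < J) :
    tailValue e J j = e j + 2 * tailValue e J (j + 1) := by
  rw [tailValue, sum_eq_sum_Ico_succ_bot hj, tailValue, mul_sum, Nat.sub_self, pow_zero, mul_one]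
  congr 1
  refine sum_congr rfl fun t ht => ?_
  rw [show t - j = t - (j + 1) + 1 by simp at ht; omega, pow_succ]
  ring

theorem tailSum_le_add (j : ℕ) : tailSum e J j ≤ e j + tailSum e J (j + 1) := by
  rcases lt_or_ge j J with hj | hj
  · rw [tailSum, sum_eq_sum_Ico_succ_bot hj]; rfl
  · simp [tailSum, Ico_eq_empty_of_le hj]

theorem tailSum_le_tailValue (j : ℕ) : tailSum e J j ≤ tailValue e J j :=
  sum_le_sum fun _ _ => Nat.le_mul_of_pos_right _ (by positivity)

theorem tailValue_sub_tailSum (j : ℕ) : tailValue e J j - tailSum e J j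
    = 2 * (tailValue e J (j + 1) - tailSum e J (j + 1)) + tailSum e J (j + 1) := by
  rcases lt_or_ge j J with hj | hj
  · have hT := tailValue_eq_add (e := e) hj
    have hS : tailSum e J j = e j + tailSum e J (j + 1) := by
      rw [tailSum, sum_eq_sum_Ico_succ_bot hj]; rfl
    have := tailSum_le_tailValue (e := e) (J := J) (j + 1)
    omega
  · simp [tailValue, tailSum, Ico_eq_empty_of_le hj, Ico_eq_empty_of_le (hj.trans j.le_succ)]

theorem tailSum_lt_tailValue (hJ : 1 < J) (he : 1 ≤ e 1) : tailSum e J 0 < tailValue e J 0 := by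
  have h₁ : e 1 ≤ tailSum e J 1 :=
    single_le_sum (f := e) (fun _ _ => Nat.zero_le _) (mem_Ico.mpr ⟨le_rfl, hJ⟩)
  have : tailValue e J 0 - tailSum e J 0
      = 2 * (tailValue e J 1 - tailSum e J 1) + tailSum e J 1 := tailValue_sub_tailSum 0
  have := tailSum_le_tailValue (e := e) (J := J) 0
  omega

-- The odometer of the game started with `tailValue e J 0 + 1` chips: firing it leaves `e j` chips
-- at `-j` and `1, …, 1, 2` on the vertices `1, …, p`, where `p = tailValue e J 0 - tailSum e J 0`.
variable (e J) in
def odometerBound (m : ℤ) : ℕ :=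
  if m ≤ 0 then tailValue e J (-m).toNat - tailSum e J (-m).toNat
  else tailValue e J 0 - tailSum e J 0 - m.toNat

theorem odometerBound_neg (j : ℕ) :
    odometerBound e J (-j) = tailValue e J j - tailSum e J j := by
  simp [odometerBound]

theorem odometerBound_natCast (m : ℕ) :
    odometerBound e J m = tailValue e J 0 - tailSum e J 0 - m := by
  rcases m with _ | m
  · simp [odometerBound]
  · simp [odometerBound, show ¬ ((m : ℤ) + 1 ≤ 0) by omega]

theorem odometerBound_stable (he : ∀ t, e t ≤ 2) (hpos : tailSum e J 0 < tailValue e J 0)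
    (m : ℤ) : initState (tailValue e J 0 + 1) m + 1 * odometerBound e J (m + 1)
      + 2 * odometerBound e J (m - 1) < (1 + 2) * (odometerBound e J m + 1) := by
  have hrec := tailValue_sub_tailSum (e := e) (J := J)
  have hle := tailSum_le_tailValue (e := e) (J := J)
  have hS := tailSum_le_add (e := e) (J := J)
  rcases lt_trichotomy m 0 with hm | rfl | hm
  · obtain ⟨j, rfl⟩ : ∃ j : ℕ, m = -((j + 1 : ℕ) : ℤ) := ⟨(-m).toNat - 1, by omega⟩
    rw [show -((j + 1 : ℕ) : ℤ) + 1 = -(j : ℤ) by push_cast; ring,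
      show -((j + 1 : ℕ) : ℤ) - 1 = -((j + 2 : ℕ) : ℤ) by push_cast; ring,
      odometerBound_neg, odometerBound_neg, odometerBound_neg, initState,
      Finsupp.single_eq_of_ne (by omega)]
    have := hrec j; have := hle j; have := hle (j + 1); have := hle (j + 2)
    have : _ = 2 * (tailValue e J (j + 2) - tailSum e J (j + 2)) + tailSum e J (j + 2) :=
      hrec (j + 1)
    have : tailSum e J (j + 1) ≤ e (j + 1) + tailSum e J (j + 2) := hS (j + 1)
    have := he (j + 1)
    omega
  · have h₀ : odometerBound e J 0 = tailValue e J 0 - tailSum e J 0 := by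
      simpa using odometerBound_natCast (e := e) (J := J) 0
    have h₁ : odometerBound e J 1 = tailValue e J 0 - tailSum e J 0 - 1 := by
      simpa using odometerBound_natCast (e := e) (J := J) 1
    have hneg : odometerBound e J (-1) = tailValue e J 1 - tailSum e J 1 := by
      simpa using odometerBound_neg (e := e) (J := J) 1
    rw [zero_add, zero_sub, h₀, h₁, hneg, initState, Finsupp.single_eq_same]
    have : tailValue e J 0 - tailSum e J 0
        = 2 * (tailValue e J 1 - tailSum e J 1) + tailSum e J 1 := hrec 0
    have : tailSum e J 0 ≤ e 0 + tailSum e J 1 := hS 0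
    have := hle 0; have := hle 1; have := he 0
    omega
  · obtain ⟨j, rfl⟩ : ∃ j : ℕ, m = ((j + 1 : ℕ) : ℤ) := ⟨m.toNat - 1, by omega⟩
    rw [show ((j + 1 : ℕ) : ℤ) + 1 = ((j + 2 : ℕ) : ℤ) by push_cast; ring,
      show ((j + 1 : ℕ) : ℤ) - 1 = (j : ℤ) by push_cast; ring,
      odometerBound_natCast, odometerBound_natCast, odometerBound_natCast, initState,
      Finsupp.single_eq_of_ne (by omega)]
    omega

end Odometer

theorem two_le_of_three_lt {b : ℕ → ℕ} {k : ℕ} (hb : ∀ i, b i ≤ 1)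
    (h : 3 < 2 ^ k + ∑ i ∈ range k, b i * 2 ^ i) : 2 ≤ k := by
  by_contra! hk
  have := hb 0
  interval_cases k
  · simp at h
  · simp at h; omega

theorem exists_support_subset_Ioc (σ : ℤ →₀ ℕ) (k : ℕ) :
    ∃ J, k ≤ J ∧ σ.support ⊆ Ioc (-(J : ℤ)) J := by
  refine ⟨k + σ.support.sup Int.natAbs + 1, by omega, fun m hm => ?_⟩
  have := le_sup (f := Int.natAbs) hm
  simp only [mem_Ioc]
  omega

/-- In the 1-2 game with `n > 3` chips, writing
`n = 2^k + Σ_{i<k} b_i 2^i` with `b_i ∈ {0,1}`, the final state has `b_i + 1`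
chips at vertex `-i` for each `0 ≤ i ≤ k-1`. -/
theorem stmt19 (n : ℕ) (hn : 3 < n) (k : ℕ) (bdig : ℕ → ℕ)
    (hbd : ∀ i : ℕ, bdig i ≤ 1)
    (hrep : n = 2 ^ k + ∑ i ∈ Finset.range k, bdig i * 2 ^ i)
    (σ : ℤ →₀ ℕ) (hσ : IsFinalState 1 2 n σ) :
    ∀ i : ℕ, i < k → σ (-(i : ℤ)) = bdig i + 1 := by
  obtain ⟨hreach, hstable⟩ := hσ
  obtain ⟨J, hkJ, hJ⟩ := exists_support_subset_Ioc σ k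
  set e : ℕ → ℕ := fun i => if i < k then bdig i + 1 else 0
  have he₂ : ∀ i, e i ≤ 2 := fun i => by have := hbd i; simp only [e]; split_ifs <;> omega
  have hk := two_le_of_three_lt hbd (hrep ▸ hn)
  have hval : ∑ i ∈ range J, e i * 2 ^ i = n - 1 := by
    have := sum_succ_mul_two_pow_add_one bdig k
    simp only [e, ite_mul, zero_mul]
    rw [sum_range_ite_lt _ hkJ]
    omega
  have hT : tailValue e J 0 = n - 1 := by simpa [tailValue, ← range_eq_Ico] using hval
  have hS : tailSum e J 0 = ∑ i ∈ range J, e i := by simp [tailSum]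
  have hpos := tailSum_lt_tailValue (e := e) (J := J) (by omega) (by simp [e, show 1 < k by omega])
  obtain ⟨w, hwv, hw⟩ := hreach.exists_odometer_le (odometerBound e J)
    (by rw [show n = tailValue e J 0 + 1 by omega]; exact odometerBound_stable he₂ hpos)
  obtain ⟨hleft, hchips⟩ := hw.sum_left_of_stable hJ hn.le hstable
  have hw₀ : w 0 ≤ tailValue e J 0 - tailSum e J 0 := by
    simpa using (odometerBound_natCast (e := e) (J := J) 0) ▸ hwv 0
  have hdigits := eq_of_digitSum_le (fun i => σ (-i)) e (k := k)
    (fun i => Nat.le_of_lt_succ (hstable _)) (fun i hi => by simp [e, hi]) (fun i hi => by simp [e, show ¬ i < k by omega])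
    (hleft.trans hval.symm) (by omega)
  intro i hi
  simpa [e, hi] using hdigits i (by omega)
end
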